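/- arXiv:1710.06108 — 9 statements merged into one kernel-verified Lean document; each statement's English description precedes it below -/
import Mathlib

section
/- Let a > 0 and let b : ℝ → ℝ be differentiable with b'(s)/s → 0 as s → ∞. Define f(s) = exp(a s² + b(s)). Then for any fixed s₁, (s · ∫_{s₁}^{s} f(z) dz) / f(s) → 1/(2a) as s → ∞. -/
/-!
Put `G s = f s / s`. Then `G' = f * (2a + b'(s)/s - 1/s²)`, so `f / G' → 1/(2a)`, and the claim is
`(∫_{s₁}^s f) / G s → 1/(2a)`, an instance of l'Hôpital's rule in the form `∞/∞`. That rule is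
proved by comparison of derivatives: if `f < m g` on `[t, ∞)` then `F - m G` is antitone there, so
`F / G ≤ m + (F t - m G t) / G`, and the last term vanishes as `G → ∞`. Finally `G → ∞` because
`log G = a s² + b s - log s` has derivative `s (2a + o(1)) → ∞`.
-/

open Filter Real Topology Set

section RatioLimits

variable {F G f g : ℝ → ℝ}

lemma sub_le_sub_of_hasDerivAt_le {t x : ℝ} (hF : ∀ y ≥ t, HasDerivAt F (f y) y)
    (hG : ∀ y ≥ t, HasDerivAt G (g y) y) (hfg : ∀ y ≥ t, f y ≤ g y) (hx : t ≤ x) :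
    F x - F t ≤ G x - G t := by
  have hmono : MonotoneOn (G - F) (Ici t) := by
    refine monotoneOn_of_hasDerivWithinAt_nonneg (f' := g - f) (convex_Ici t) ?_ (fun y hy => ?_)
      (fun y hy => ?_)
    · exact fun y hy => ((hG y hy).continuousAt.sub (hF y hy).continuousAt).continuousWithinAt
    · rw [interior_Ici] at hy
      exact ((hG y hy.le).sub (hF y hy.le)).hasDerivWithinAt
    · rw [interior_Ici] at hy
      exact sub_nonneg.2 (hfg y hy.le)
  have := hmono self_mem_Ici hx hx
  simp only [Pi.sub_apply] at this
  linarith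

lemma tendsto_atTop_of_hasDerivAt_ge {c : ℝ} (hc : 0 < c)
    (hF : ∀ᶠ x in atTop, HasDerivAt F (f x) x) (hf : ∀ᶠ x in atTop, c ≤ f x) :
    Tendsto F atTop atTop := by
  obtain ⟨t, ht⟩ := eventually_atTop.1 (hF.and hf)
  have hlin : Tendsto (fun x => c * x + (F t - c * t)) atTop atTop :=
    tendsto_atTop_add_const_right _ _ (tendsto_id.const_mul_atTop hc)
  refine tendsto_atTop_mono' _ ?_ hlin
  filter_upwards [eventually_ge_atTop t] with x hx
  have := sub_le_sub_of_hasDerivAt_le (F := fun y => c * y) (f := fun _ => c)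
    (fun y _ => by simpa using (hasDerivAt_id y).const_mul c) (fun y hy => (ht y hy).1)
    (fun y hy => (ht y hy).2) hx
  linarith

lemma eventually_div_lt_of_hasDerivAt (hF : ∀ᶠ x in atTop, HasDerivAt F (f x) x)
    (hG : ∀ᶠ x in atTop, HasDerivAt G (g x) x) (hg : ∀ᶠ x in atTop, 0 < g x)
    (hGtop : Tendsto G atTop atTop) {m u : ℝ} (hfg : ∀ᶠ x in atTop, f x / g x < m)
    (hmu : m < u) : ∀ᶠ x in atTop, F x / G x < u := by
  obtain ⟨t, ht⟩ := eventually_atTop.1 (hF.and (hG.and (hg.and hfg)))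
  have hC : Tendsto (fun x => (F t - m * G t) / G x) atTop (𝓝 0) :=
    tendsto_const_nhds.div_atTop hGtop
  filter_upwards [eventually_ge_atTop t, hGtop.eventually_gt_atTop 0,
    hC.eventually_lt_const (sub_pos.2 hmu)] with x hx hGx hCx
  have := sub_le_sub_of_hasDerivAt_le (G := fun y => m * G y) (g := fun y => m * g y)
    (fun y hy => (ht y hy).1) (fun y hy => (ht y hy).2.1.const_mul m)
    (fun y hy => ((div_lt_iff₀ (ht y hy).2.2.1).1 (ht y hy).2.2.2).le) hx
  rw [div_lt_iff₀ hGx]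
  rw [div_lt_iff₀ hGx] at hCx
  nlinarith

theorem tendsto_div_of_hasDerivAt_of_tendsto_atTop (hF : ∀ᶠ x in atTop, HasDerivAt F (f x) x)
    (hG : ∀ᶠ x in atTop, HasDerivAt G (g x) x) (hg : ∀ᶠ x in atTop, 0 < g x)
    (hGtop : Tendsto G atTop atTop) {L : ℝ}
    (hfg : Tendsto (fun x => f x / g x) atTop (𝓝 L)) :
    Tendsto (fun x => F x / G x) atTop (𝓝 L) := by
  refine tendsto_order.2 ⟨fun l hl => ?_, fun u hu => ?_⟩
  · obtain ⟨m, hlm, hmL⟩ := exists_between hl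
    have hneg : Tendsto (fun x => -f x / g x) atTop (𝓝 (-L)) := by
      simpa only [neg_div] using hfg.neg
    have := eventually_div_lt_of_hasDerivAt (F := fun x => -F x) (f := fun x => -f x)
      (hF.mono fun x hx => hx.neg) hG hg hGtop
      ((tendsto_order.1 hneg).2 (-m) (neg_lt_neg hmL)) (neg_lt_neg hlm)
    filter_upwards [this] with x hx
    rwa [neg_div, neg_lt_neg_iff] at hx
  · obtain ⟨m, hLm, hmu⟩ := exists_between hu
    exact eventually_div_lt_of_hasDerivAt hF hG hg hGtop ((tendsto_order.1 hfg).2 m hLm) hmu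

end RatioLimits

section GaussianType

variable {a : ℝ} {b : ℝ → ℝ}

lemma hasDerivAt_quadratic_add (hb : Differentiable ℝ b) (s : ℝ) :
    HasDerivAt (fun s => a * s ^ 2 + b s) (2 * a * s + deriv b s) s :=
  (((hasDerivAt_pow 2 s).const_mul a).add (hb s).hasDerivAt).congr_deriv (by ring)

lemma tendsto_two_mul_add_deriv_div_sub_inv_sq
    (hb' : Tendsto (fun s => deriv b s / s) atTop (𝓝 0)) :
    Tendsto (fun s => 2 * a + deriv b s / s - (s ^ 2)⁻¹) atTop (𝓝 (2 * a)) := by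
  have hsq : Tendsto (fun s : ℝ => (s ^ 2)⁻¹) atTop (𝓝 0) :=
    tendsto_inv_atTop_zero.comp (tendsto_pow_atTop two_ne_zero)
  simpa using (hb'.const_add (2 * a)).sub hsq

lemma hasDerivAt_exp_quadratic_add_div (hb : Differentiable ℝ b) {s : ℝ} (hs : s ≠ 0) :
    HasDerivAt (fun s => exp (a * s ^ 2 + b s) / s)
      (exp (a * s ^ 2 + b s) * (2 * a + deriv b s / s - (s ^ 2)⁻¹)) s :=
  ((hasDerivAt_quadratic_add hb s).exp.div (hasDerivAt_id' s) hs).congr_deriv (by field_simp)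

lemma hasDerivAt_quadratic_add_sub_log (hb : Differentiable ℝ b) {s : ℝ} (hs : s ≠ 0) :
    HasDerivAt (fun s => a * s ^ 2 + b s - log s) (s * (2 * a + deriv b s / s - (s ^ 2)⁻¹)) s :=
  ((hasDerivAt_quadratic_add hb s).sub (hasDerivAt_log hs)).congr_deriv (by field_simp)

lemma tendsto_exp_quadratic_add_div_atTop (ha : 0 < a) (hb : Differentiable ℝ b)
    (hb' : Tendsto (fun s => deriv b s / s) atTop (𝓝 0)) :
    Tendsto (fun s => exp (a * s ^ 2 + b s) / s) atTop atTop := by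
  have hderiv : Tendsto (fun s => s * (2 * a + deriv b s / s - (s ^ 2)⁻¹)) atTop atTop :=
    tendsto_id.atTop_mul_pos (by positivity) (tendsto_two_mul_add_deriv_div_sub_inv_sq hb')
  have hlog : Tendsto (fun s => a * s ^ 2 + b s - log s) atTop atTop :=
    tendsto_atTop_of_hasDerivAt_ge one_pos
      ((eventually_ne_atTop 0).mono fun s hs => hasDerivAt_quadratic_add_sub_log hb hs)
      (hderiv.eventually_ge_atTop 1)
  refine (tendsto_exp_atTop.comp hlog).congr' ?_
  filter_upwards [eventually_gt_atTop 0] with s hs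
  simp [exp_sub, exp_log hs]

end GaussianType

theorem stmt_2 (a : ℝ) (ha : 0 < a) (b : ℝ → ℝ) (hb : Differentiable ℝ b)
    (hb' : Tendsto (fun s => deriv b s / s) atTop (nhds 0))
    (f : ℝ → ℝ) (hf : ∀ s, f s = Real.exp (a * s ^ 2 + b s)) (s₁ : ℝ) :
    Tendsto (fun s => (s * ∫ z in s₁..s, f z) / f s) atTop (nhds (1 / (2 * a))) := by
  obtain rfl : f = fun s => exp (a * s ^ 2 + b s) := funext hf
  have hh := tendsto_two_mul_add_deriv_div_sub_inv_sq (a := a) hb'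
  have hratio : Tendsto (fun s => exp (a * s ^ 2 + b s) /
      (exp (a * s ^ 2 + b s) * (2 * a + deriv b s / s - (s ^ 2)⁻¹))) atTop (𝓝 (1 / (2 * a))) := by
    simpa [div_mul_cancel_left₀ (exp_pos _).ne', one_div] using hh.inv₀ (by positivity)
  have hcont : Continuous fun s => exp (a * s ^ 2 + b s) := by
    have := hb.continuous
    fun_prop
  have hI := tendsto_div_of_hasDerivAt_of_tendsto_atTop
    (Eventually.of_forall fun s => (hcont.integral_hasStrictDerivAt s₁ s).hasDerivAt)
    ((eventually_ne_atTop 0).mono fun s hs => hasDerivAt_exp_quadratic_add_div hb hs)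
    ((hh.eventually_const_lt (by positivity)).mono fun s hs => mul_pos (exp_pos _) hs)
    (tendsto_exp_quadratic_add_div_atTop ha hb hb') hratio
  simpa only [div_div_eq_mul_div, mul_comm] using hI
end

section
/- Let a > 0 and let b be differentiable with b'(s)/s → 0 as s → ∞. Define f(s) = exp(a s² + b(s)). Then for any fixed s₁ > 1, (s² · ∫_{s₁}^{s} (log z / z) f(z) dz) / (f(s) · log s) → 1/(2a) as s → ∞. -/
/-!
Put `g z = (log z / z) f z` and `G s = f s log s / (2 a s²)`. Then `G' = g (1 + ε)` with
`ε z = b'(z) / (2 a z) - 1 / (a z²) + 1 / (2 a z² log z) → 0`, and `G → ∞` because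
`b(s) = o(s²)`, itself a consequence of `b'(s) / s → 0` by l'Hôpital. Hence l'Hôpital's rule
for `∞ / ∞`, proved from Cauchy's mean value theorem, gives `∫_{s₁}^s g / G → 1`.
-/

open Filter Real Topology Asymptotics

theorem lhopital_atTop_of_tendsto_atTop {f g f' g' : ℝ → ℝ} {l : ℝ}
    (hff' : ∀ᶠ x in atTop, HasDerivAt f (f' x) x) (hgg' : ∀ᶠ x in atTop, HasDerivAt g (g' x) x)
    (hg' : ∀ᶠ x in atTop, g' x ≠ 0) (hg : Tendsto g atTop atTop)
    (hdiv : Tendsto (fun x => f' x / g' x) atTop (𝓝 l)) :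
    Tendsto (fun x => f x / g x) atTop (𝓝 l) := by
  suffices hlo : (fun x => f x - l * g x) =o[atTop] g by
    refine (zero_add l ▸ hlo.tendsto_div_nhds_zero.add_const l).congr' ?_
    filter_upwards [hg.eventually_gt_atTop 0] with x hx
    field_simp
    ring
  refine isLittleO_iff.2 fun c hc => ?_
  obtain ⟨T, hT⟩ := eventually_atTop.1 <| (hff'.and hgg').and <| hg'.and <|
    (Metric.tendsto_nhds.1 hdiv) (c / 2) (half_pos hc)
  set K := |f T - l * g T| + c / 2 * |g T|
  filter_upwards [eventually_gt_atTop T, hg.eventually_ge_atTop (2 / c * K)] with s hTs hKs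
  obtain ⟨ξ, hξ, hcmvt⟩ := exists_ratio_hasDerivAt_eq_ratio_slope f f' hTs
    (fun x hx => (hT x hx.1).1.1.continuousAt.continuousWithinAt) (fun x hx => (hT x hx.1.le).1.1)
    g g' (fun x hx => (hT x hx.1).1.2.continuousAt.continuousWithinAt)
    (fun x hx => (hT x hx.1.le).1.2)
  obtain ⟨-, hξ0, hξl⟩ := hT ξ hξ.1.le
  set q := f' ξ / g' ξ
  have hslope : f s - f T = q * (g s - g T) := by
    simp only [q]; field_simp; linarith
  have hq : |q - l| ≤ c / 2 := by rw [← Real.dist_eq]; exact hξl.le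
  have hgs : 0 ≤ g s := le_trans (by positivity) hKs
  rw [Real.norm_eq_abs, Real.norm_eq_abs, abs_of_nonneg hgs]
  calc |f s - l * g s| = |(f T - l * g T) + (q - l) * (g s - g T)| := by
        congr 1; linear_combination hslope
    _ ≤ |f T - l * g T| + c / 2 * (g s + |g T|) := by
        have hdiff : |g s - g T| ≤ g s + |g T| :=
          (abs_sub _ _).trans_eq (by rw [abs_of_nonneg hgs])
        grw [abs_add_le, abs_mul, hq, hdiff]
    _ = K + c / 2 * g s := by ring
    _ ≤ c * g s := by
        rw [div_mul_eq_mul_div, div_le_iff₀ hc] at hKs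
        linarith

theorem tendsto_div_sq_of_tendsto_deriv_div {b : ℝ → ℝ} {l : ℝ}
    (hb : ∀ᶠ x in atTop, DifferentiableAt ℝ b x)
    (hb' : Tendsto (fun x => deriv b x / x) atTop (𝓝 l)) :
    Tendsto (fun x => b x / x ^ 2) atTop (𝓝 (l / 2)) := by
  refine lhopital_atTop_of_tendsto_atTop (f' := deriv b) (g' := fun x => 2 * x)
    (hb.mono fun x hx => hx.hasDerivAt) ?_ ?_ (tendsto_pow_atTop two_ne_zero) ?_
  · exact Eventually.of_forall fun x => by simpa using hasDerivAt_pow 2 x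
  · filter_upwards [eventually_gt_atTop 0] with x hx using by positivity
  · refine (hb'.div_const 2).congr fun x => ?_
    rw [div_div, mul_comm]

theorem ContinuousOn.integral_hasDerivAt_right {g : ℝ → ℝ} {U : Set ℝ} {s₁ s : ℝ}
    (hg : ContinuousOn g U) (hU : IsOpen U) (hsub : Set.uIcc s₁ s ⊆ U) :
    HasDerivAt (fun u => ∫ x in s₁..u, g x) (g s) s := by
  have hs : s ∈ U := hsub Set.right_mem_uIcc
  exact intervalIntegral.integral_hasDerivAt_right ((hg.mono hsub).intervalIntegrable)
    (hg.stronglyMeasurableAtFilter hU s hs) (hg.continuousAt (hU.mem_nhds hs))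

variable {a : ℝ} {b : ℝ → ℝ}

theorem tendsto_exp_mul_log_div_atTop (ha : 0 < a)
    (hb : Tendsto (fun s => b s / s ^ 2) atTop (𝓝 0)) :
    Tendsto (fun s => exp (a * s ^ 2 + b s) * log s / (2 * a * s ^ 2)) atTop atTop := by
  have hsq : Tendsto (fun s : ℝ => 2 * a * s ^ 2) atTop atTop :=
    (tendsto_pow_atTop two_ne_zero).const_mul_atTop (by positivity)
  have hb_o : b =o[atTop] fun s => a * s ^ 2 :=
    ((isLittleO_iff_tendsto' <| (eventually_gt_atTop 0).mono
      fun s hs h => absurd h (by positivity)).2 hb).const_mul_right ha.ne'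
  have hlog_o : (fun s => log (2 * a * s ^ 2)) =o[atTop] fun s => a * s ^ 2 :=
    (isLittleO_log_id_atTop.comp_tendsto hsq).trans_isBigO
      ((isBigO_const_mul_self 2 (fun s : ℝ => a * s ^ 2) atTop).congr_left fun s => by
        simp only [Function.comp_apply, id]
        ring)
  have hexponent : Tendsto (fun s => a * s ^ 2 + (b s - log (2 * a * s ^ 2))) atTop atTop :=
    ((IsEquivalent.refl.add_isLittleO (hb_o.sub hlog_o)).symm).tendsto_atTop
      ((tendsto_pow_atTop two_ne_zero).const_mul_atTop ha)
  refine ((tendsto_exp_atTop.comp hexponent).atTop_mul_atTop₀ tendsto_log_atTop).congr' ?_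
  filter_upwards [eventually_gt_atTop 0] with s hs
  simp only [Function.comp, exp_add, exp_sub, exp_log (by positivity : 0 < 2 * a * s ^ 2)]
  ring

theorem hasDerivAt_exp_mul_log_div (ha : a ≠ 0) {z : ℝ} (hz : 1 < z)
    (hb : DifferentiableAt ℝ b z) :
    HasDerivAt (fun s => exp (a * s ^ 2 + b s) * log s / (2 * a * s ^ 2))
      (log z / z * exp (a * z ^ 2 + b z) * (1 + (deriv b z / z / (2 * a) - 1 / (a * z ^ 2)
        + 1 / (2 * a * z ^ 2 * log z)))) z := by
  have hz0 : z ≠ 0 := by positivity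
  have hlog : log z ≠ 0 := (log_pos hz).ne'
  have hexp : HasDerivAt (fun s => exp (a * s ^ 2 + b s))
      (exp (a * z ^ 2 + b z) * (a * (2 * z) + deriv b z)) z := by
    simpa using (((hasDerivAt_pow 2 z).const_mul a).add hb.hasDerivAt).exp
  have hden : HasDerivAt (fun s => 2 * a * s ^ 2) (2 * a * (2 * z)) z := by
    simpa using (hasDerivAt_pow 2 z).const_mul (2 * a)
  refine ((hexp.mul (hasDerivAt_log hz0)).div hden (by positivity)).congr_deriv ?_
  simp only [Pi.mul_apply]
  field_simp
  ring

theorem tendsto_correction (hb' : Tendsto (fun s => deriv b s / s) atTop (𝓝 0)) :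
    Tendsto (fun z => deriv b z / z / (2 * a) - 1 / (a * z ^ 2) + 1 / (2 * a * z ^ 2 * log z))
      atTop (𝓝 0) := by
  have hsq : Tendsto (fun z : ℝ => z ^ 2) atTop atTop := tendsto_pow_atTop two_ne_zero
  have h1 := hb'.div_const (2 * a)
  have h2 := (tendsto_inv_atTop_zero.comp hsq).const_mul a⁻¹
  have h3 := (tendsto_inv_atTop_zero.comp (hsq.atTop_mul_atTop₀ tendsto_log_atTop)).const_mul
    (2 * a)⁻¹
  simp only [Function.comp_def, mul_zero, zero_div] at h1 h2 h3
  have h := (h1.sub h2).add h3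
  rw [sub_zero, add_zero] at h
  refine h.congr fun z => ?_
  simp only [one_div, mul_inv]
  ring

theorem stmt_3 (a : ℝ) (ha : 0 < a) (b : ℝ → ℝ) (hb : Differentiable ℝ b)
    (hb' : Tendsto (fun s => deriv b s / s) atTop (nhds 0))
    (f : ℝ → ℝ) (hf : ∀ s, f s = Real.exp (a * s ^ 2 + b s)) (s₁ : ℝ) (hs₁ : 1 < s₁) :
    Tendsto (fun s => (s ^ 2 * ∫ z in s₁..s, (Real.log z / z) * f z) / (f s * Real.log s))
      atTop (nhds (1 / (2 * a))) := by
  obtain rfl : f = fun s => exp (a * s ^ 2 + b s) := funext hf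
  set g := fun z => log z / z * exp (a * z ^ 2 + b z)
  set ε := fun z => deriv b z / z / (2 * a) - 1 / (a * z ^ 2) + 1 / (2 * a * z ^ 2 * log z)
  have hε : Tendsto ε atTop (𝓝 0) := tendsto_correction hb'
  have hg_pos : ∀ z, 1 < z → 0 < g z := fun z hz => by
    have := log_pos hz
    positivity
  have hcont : ContinuousOn g (Set.Ioi 0) :=
    ((continuousOn_log.mono fun _ hz => ne_of_gt hz).div continuousOn_id
      fun _ hz => ne_of_gt hz).mul (by have := hb.continuous; fun_prop)
  have hratio : Tendsto (fun s => (∫ z in s₁..s, g z) /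
      (exp (a * s ^ 2 + b s) * log s / (2 * a * s ^ 2))) atTop (𝓝 1) := by
    refine lhopital_atTop_of_tendsto_atTop (f' := g) (g' := fun z => g z * (1 + ε z)) ?_ ?_ ?_
      (tendsto_exp_mul_log_div_atTop ha
        (by simpa using tendsto_div_sq_of_tendsto_deriv_div (.of_forall hb) hb')) ?_
    · filter_upwards [eventually_gt_atTop 0] with s hs
      exact hcont.integral_hasDerivAt_right isOpen_Ioi
        (Set.ordConnected_Ioi.uIcc_subset (by simp; linarith) hs)
    · filter_upwards [eventually_gt_atTop 1] with z hz
        using hasDerivAt_exp_mul_log_div ha.ne' hz (hb z)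
    · filter_upwards [eventually_gt_atTop 1,
        hε.eventually (lt_mem_nhds (by norm_num : (-1 : ℝ) < 0))] with z hz hεz
      exact mul_ne_zero (hg_pos z hz).ne' (by linarith)
    · have h := (tendsto_const_nhds.add hε).inv₀ (by norm_num : (1 : ℝ) + 0 ≠ 0)
      rw [add_zero, inv_one] at h
      refine h.congr' ?_
      filter_upwards [eventually_gt_atTop 1] with z hz
      rw [div_mul_eq_div_div, div_self (hg_pos z hz).ne', one_div]
  refine (hratio.div_const (2 * a)).congr' ?_
  filter_upwards [eventually_gt_atTop 1] with s hs
  set I := ∫ z in s₁..s, g z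
  have := log_pos hs
  field_simp
end

section
/- Let c, A, B, b₀ ∈ ℝ with c > 0. Suppose h : ℝ → ℝ is C² and there is a function H with H(s) → −b₀ as s → ∞ such that h'' + (2cs + A·h + B)·h' = H(s) for all s, and suppose h'(s) → 0 as s → ∞. Then s·h'(s) → −b₀/(2c) as s → ∞. -/
/-!
With the integrating factor `f = exp φ`, where `φ' = 2cs + A h + B` is the coefficient of `h'`,
the equation reads `(f h')' = f H`. Write `s h'(s) = (f h')(s) / (f(s) / s)`: since `h' → 0` gives
`h(s) = o(s)`, we get `φ(s) ~ c s²`, so the denominator tends to infinity, and the ∞/∞ form of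
l'Hôpital's rule reduces the limit to that of `f H / (f (φ'/s - 1/s²))`, which is `-b₀ / (2c)`.
-/

open Filter Real Set Topology

theorem tendsto_div_atTop_of_tendsto_deriv_div {N D N' D' : ℝ → ℝ} {L : ℝ}
    (hN : ∀ᶠ x in atTop, HasDerivAt N (N' x) x) (hD : ∀ᶠ x in atTop, HasDerivAt D (D' x) x)
    (hD' : ∀ᶠ x in atTop, D' x ≠ 0) (hDtop : Tendsto D atTop atTop)
    (hr : Tendsto (fun x => N' x / D' x) atTop (𝓝 L)) :
    Tendsto (fun x => N x / D x) atTop (𝓝 L) := by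
  rw [Metric.tendsto_nhds]
  intro ε hε
  obtain ⟨a, ha⟩ := eventually_atTop.mp
    (hN.and (hD.and (hD'.and (Metric.tendsto_nhds.mp hr (ε / 3) (by positivity)))))
  have hcauchy : ∀ s > a, ∃ r, |r - L| < ε / 3 ∧ N s - N a = r * (D s - D a) := by
    intro s hs
    have hcont {F F' : ℝ → ℝ} (hF : ∀ x ≥ a, HasDerivAt F (F' x) x) : ContinuousOn F (Icc a s) :=
      fun x hx => (hF x hx.1).continuousAt.continuousWithinAt
    obtain ⟨ξ, hξ, hslope⟩ := exists_ratio_hasDerivAt_eq_ratio_slope N N' hs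
      (hcont fun x hx => (ha x hx).1) (fun x hx => (ha x hx.1.le).1) D D'
      (hcont fun x hx => (ha x hx).2.1) (fun x hx => (ha x hx.1.le).2.1)
    obtain ⟨-, -, hD'ξ, hrξ⟩ := ha ξ hξ.1.le
    refine ⟨N' ξ / D' ξ, by simpa [Real.dist_eq] using hrξ, ?_⟩
    field_simp
    linarith
  have hsmall : Tendsto (fun s => (N a - L * D a) / D s) atTop (𝓝 0) :=
    tendsto_const_nhds.div_atTop hDtop
  have hone : Tendsto (fun s => (D s - D a) / D s) atTop (𝓝 1) := by
    have h := (tendsto_const_nhds (x := (1 : ℝ))).sub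
      ((tendsto_const_nhds (x := D a)).div_atTop hDtop)
    rw [sub_zero] at h
    refine h.congr' ?_
    filter_upwards [hDtop.eventually_gt_atTop 0] with s hs
    field_simp
  filter_upwards [Metric.tendsto_nhds.mp hsmall (ε / 3) (by positivity),
    Metric.tendsto_nhds.mp hone 1 one_pos, eventually_gt_atTop a,
    hDtop.eventually_gt_atTop 0] with s hsmall_s hone_s hs hDs
  obtain ⟨r, hr, hNs⟩ := hcauchy s hs
  rw [Real.dist_eq] at hsmall_s hone_s ⊢
  have hsplit : N s / D s - L = (N a - L * D a) / D s + (r - L) * ((D s - D a) / D s) := by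
    rw [show N s = N a + r * (D s - D a) by linarith]
    field_simp
    ring
  have hbound : |(D s - D a) / D s| < 2 := by
    have := abs_sub_abs_le_abs_sub ((D s - D a) / D s) 1
    rw [abs_one] at this
    linarith
  calc |N s / D s - L|
      ≤ |(N a - L * D a) / D s| + |r - L| * |(D s - D a) / D s| := by
        rw [hsplit, ← abs_mul]; exact abs_add_le _ _
    _ < ε / 3 + ε / 3 * 2 := by gcongr; simpa using hsmall_s
    _ = ε := by ring

theorem tendsto_exp_div_atTop_of_tendsto_deriv_div {φ φ' : ℝ → ℝ} {k : ℝ} (hk : 0 < k)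
    (hφ : ∀ᶠ x in atTop, HasDerivAt φ (φ' x) x)
    (hφ' : Tendsto (fun x => φ' x / x) atTop (𝓝 k)) :
    Tendsto (fun x => exp (φ x) / x) atTop atTop := by
  have hquad : Tendsto (fun x => φ x / x ^ 2) atTop (𝓝 (k / 2)) := by
    refine tendsto_div_atTop_of_tendsto_deriv_div (D' := fun x => 2 * x) hφ
      (Eventually.of_forall fun x => by simpa using hasDerivAt_pow 2 x)
      (by filter_upwards [eventually_gt_atTop 0] with x hx; positivity)
      (tendsto_pow_atTop two_ne_zero) ?_
    refine (hφ'.div_const 2).congr' ?_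
    filter_upwards [eventually_gt_atTop 0] with x hx
    field_simp
  refine tendsto_atTop_mono' _ ?_ (tendsto_id.const_mul_atTop (by positivity : 0 < k / 4))
  filter_upwards [hquad.eventually (eventually_gt_nhds (by linarith : k / 4 < k / 2)),
    eventually_gt_atTop 0] with x hx hx0
  rw [lt_div_iff₀ (by positivity)] at hx
  rw [id, le_div_iff₀ hx0]
  nlinarith [add_one_le_exp (φ x)]

theorem tendsto_mul_self_of_hasDerivAt_add_mul_eq {u u' p φ H : ℝ → ℝ} {k L : ℝ} (hk : 0 < k)
    (hu : ∀ᶠ s in atTop, HasDerivAt u (u' s) s) (hφ : ∀ᶠ s in atTop, HasDerivAt φ (p s) s)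
    (hode : ∀ᶠ s in atTop, u' s + p s * u s = H s)
    (hp : Tendsto (fun s => p s / s) atTop (𝓝 k)) (hH : Tendsto H atTop (𝓝 L)) :
    Tendsto (fun s => s * u s) atTop (𝓝 (L / k)) := by
  set q : ℝ → ℝ := fun s => p s / s - 1 / s ^ 2
  have hq : Tendsto q atTop (𝓝 k) := by
    simpa using hp.sub (tendsto_const_nhds.div_atTop (tendsto_pow_atTop two_ne_zero))
  have hN : ∀ᶠ s in atTop, HasDerivAt (fun s => exp (φ s) * u s) (exp (φ s) * H s) s := by
    filter_upwards [hu, hφ, hode] with s hus hφs hodes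
    refine (hφs.exp.mul hus).congr_deriv ?_
    rw [← hodes]
    ring
  have hD : ∀ᶠ s in atTop, HasDerivAt (fun s => exp (φ s) / s) (exp (φ s) * q s) s := by
    filter_upwards [hφ, eventually_gt_atTop 0] with s hφs hs
    refine (hφs.exp.div (hasDerivAt_id s) hs.ne').congr_deriv ?_
    simp only [q, id]
    field_simp
  have hD' : ∀ᶠ s in atTop, exp (φ s) * q s ≠ 0 := by
    filter_upwards [hq.eventually (eventually_gt_nhds hk)] with s hs
    positivity
  have hratio : Tendsto (fun s => exp (φ s) * H s / (exp (φ s) * q s)) atTop (𝓝 (L / k)) :=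
    (hH.div hq hk.ne').congr fun s => (mul_div_mul_left _ _ (exp_pos _).ne').symm
  refine (tendsto_div_atTop_of_tendsto_deriv_div hN hD hD'
    (tendsto_exp_div_atTop_of_tendsto_deriv_div hk hφ hp) hratio).congr' ?_
  filter_upwards [eventually_gt_atTop 0] with s hs
  field_simp

theorem stmt_6 (c A B b₀ : ℝ) (hc : 0 < c) (h H : ℝ → ℝ) (hh : ContDiff ℝ 2 h)
    (hH : Tendsto H atTop (nhds (-b₀)))
    (hode : ∀ s, deriv (deriv h) s + (2 * c * s + A * h s + B) * deriv h s = H s)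
    (hh' : Tendsto (deriv h) atTop (nhds 0)) :
    Tendsto (fun s => s * deriv h s) atTop (nhds (-b₀ / (2 * c))) := by
  have hdh : ∀ s, HasDerivAt h (deriv h s) s :=
    fun s => (hh.differentiable two_ne_zero s).hasDerivAt
  have hddh : ∀ s, HasDerivAt (deriv h) (deriv (deriv h) s) s :=
    fun s => (hh.differentiable_deriv_two s).hasDerivAt
  have hsublin : Tendsto (fun s => h s / s) atTop (𝓝 0) := by
    refine tendsto_div_atTop_of_tendsto_deriv_div (D := id) (D' := fun _ => 1)
      (.of_forall hdh) (.of_forall hasDerivAt_id) (.of_forall fun _ => one_ne_zero) tendsto_id ?_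
    simpa using hh'
  have hp : Tendsto (fun s => (2 * c * s + A * h s + B) / s) atTop (𝓝 (2 * c)) := by
    have := ((hsublin.const_mul A).add (tendsto_inv_atTop_zero.const_mul B)).const_add (2 * c)
    rw [mul_zero, mul_zero, add_zero, add_zero] at this
    refine this.congr' ?_
    filter_upwards [eventually_gt_atTop 0] with s hs
    field_simp
    ring
  have hφ : ∀ s, HasDerivAt (fun s => c * s ^ 2 + A * (∫ t in (0 : ℝ)..s, h t) + B * s)
      (2 * c * s + A * h s + B) s := by
    intro s
    have hint := (hh.continuous.integral_hasStrictDerivAt 0 s).hasDerivAt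
    have hsq : HasDerivAt (fun s => s ^ 2) (2 * s) s := by simpa using hasDerivAt_pow 2 s
    exact (((hsq.const_mul c).add (hint.const_mul A)).add
      ((hasDerivAt_id s).const_mul B)).congr_deriv (by ring)
  exact tendsto_mul_self_of_hasDerivAt_add_mul_eq (by positivity) (.of_forall hddh)
    (.of_forall hφ) (.of_forall hode) hp hH
end

section
/- Let c, A, B ∈ ℝ with c > 0, and let h : ℝ → ℝ be C² with h'(s) → 0 as s → ∞ and h(s)/s → 0 as s → ∞. Suppose s·H(s)/log s → −a₃ as s → ∞, where H(s) := h''(s) + (2cs + A h(s) + B)h'(s). Then s² h'(s)/log s → −a₃/(2c) as s → ∞. -/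
/-!
With the integrating factor `f = exp E`, `E s = c s² + A ∫₀ˢ h + B s`, one has `(f h')' = f H`.
The comparison function `g s = f s · log s / s²` tends to infinity because `E s ~ c s²`, and
`g' = f · (log s / s) · q` with `q → 2c`, so `(f h')' / g' → -a₃ / (2c)`. L'Hôpital's rule in its
`∞/∞` form then gives `f h' / g = s² h' / log s → -a₃ / (2c)`.
-/

open Filter Real Topology Set

section LHopital

variable {f g f' g' : ℝ → ℝ}

theorem eventually_lt_mul_of_hasDerivAt_le {m m' : ℝ}
    (hff' : ∀ᶠ x in atTop, HasDerivAt f (f' x) x) (hgg' : ∀ᶠ x in atTop, HasDerivAt g (g' x) x)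
    (hle : ∀ᶠ x in atTop, f' x ≤ m * g' x) (hg : Tendsto g atTop atTop) (hm : m < m') :
    ∀ᶠ x in atTop, f x < m' * g x := by
  obtain ⟨a, ha⟩ := eventually_atTop.1 (hff'.and (hgg'.and hle))
  have hderiv : ∀ x ∈ Ici a, HasDerivAt (fun x => m * g x - f x) (m * g' x - f' x) x :=
    fun x hx => ((ha x hx).2.1.const_mul m).sub (ha x hx).1
  have hmono : MonotoneOn (fun x => m * g x - f x) (Ici a) :=
    monotoneOn_of_hasDerivWithinAt_nonneg (convex_Ici a)
      (fun x hx => (hderiv x hx).continuousAt.continuousWithinAt)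
      (fun x hx => (hderiv x (interior_subset hx)).hasDerivWithinAt)
      (fun x hx => sub_nonneg.2 (ha x (interior_subset hx)).2.2)
  filter_upwards [eventually_ge_atTop a,
    hg.eventually_gt_atTop ((f a - m * g a) / (m' - m))] with x hxa hgx
  have hax : m * g a - f a ≤ m * g x - f x := hmono self_mem_Ici hxa hxa
  rw [div_lt_iff₀ (sub_pos.2 hm)] at hgx
  linarith

theorem lhopital_atTop_atTop {l : ℝ}
    (hff' : ∀ᶠ x in atTop, HasDerivAt f (f' x) x) (hgg' : ∀ᶠ x in atTop, HasDerivAt g (g' x) x)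
    (hg' : ∀ᶠ x in atTop, 0 < g' x) (hg : Tendsto g atTop atTop)
    (hdiv : Tendsto (fun x => f' x / g' x) atTop (𝓝 l)) :
    Tendsto (fun x => f x / g x) atTop (𝓝 l) := by
  refine tendsto_order.2 ⟨fun l' hl' => ?_, fun l' hl' => ?_⟩
  · obtain ⟨m, hl'm, hml⟩ := exists_between hl'
    have hle : ∀ᶠ x in atTop, -f' x ≤ -m * g' x := by
      filter_upwards [hdiv.eventually (lt_mem_nhds hml), hg'] with x hx hgx
      rw [lt_div_iff₀ hgx] at hx
      linarith
    filter_upwards [eventually_lt_mul_of_hasDerivAt_le (hff'.mono fun x hx => hx.fun_neg) hgg'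
      hle hg (neg_lt_neg hl'm), hg.eventually_gt_atTop 0] with x hx hgx
    rw [lt_div_iff₀ hgx]
    linarith
  · obtain ⟨m, hlm, hml'⟩ := exists_between hl'
    have hle : ∀ᶠ x in atTop, f' x ≤ m * g' x := by
      filter_upwards [hdiv.eventually (gt_mem_nhds hlm), hg'] with x hx hgx
      rw [div_lt_iff₀ hgx] at hx
      exact hx.le
    filter_upwards [eventually_lt_mul_of_hasDerivAt_le hff' hgg' hle hg hml',
      hg.eventually_gt_atTop 0] with x hx hgx
    rwa [div_lt_iff₀ hgx]

end LHopital

noncomputable def integratingExponent (c A B : ℝ) (h : ℝ → ℝ) (s : ℝ) : ℝ :=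
  c * s ^ 2 + A * (∫ t in (0 : ℝ)..s, h t) + B * s

section IntegratingExponent

variable {c A B : ℝ} {h : ℝ → ℝ}

theorem hasDerivAt_integratingExponent (hh : Continuous h) (s : ℝ) :
    HasDerivAt (integratingExponent c A B h) (2 * c * s + A * h s + B) s := by
  have := (((hasDerivAt_pow 2 s).const_mul c).fun_add
    ((hh.integral_hasStrictDerivAt 0 s).hasDerivAt.const_mul A)).fun_add
    ((hasDerivAt_id' s).const_mul B)
  rw [show 2 * c * s + A * h s + B = c * ((2 : ℕ) * s ^ (2 - 1)) + A * h s + B * 1 by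
    norm_num; ring]
  exact this

theorem tendsto_deriv_integratingExponent_div
    (hhs : Tendsto (fun s => h s / s) atTop (𝓝 0)) :
    Tendsto (fun s => (2 * c * s + A * h s + B) / s) atTop (𝓝 (2 * c)) := by
  have := ((hhs.const_mul A).add (tendsto_inv_atTop_zero.const_mul B)).const_add (2 * c)
  rw [mul_zero, mul_zero, add_zero, add_zero] at this
  refine this.congr' ?_
  filter_upwards [eventually_ne_atTop 0] with s hs
  field_simp
  ring

theorem tendsto_integratingExponent_div_sq (hh : Continuous h)
    (hhs : Tendsto (fun s => h s / s) atTop (𝓝 0)) :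
    Tendsto (fun s => integratingExponent c A B h s / s ^ 2) atTop (𝓝 c) := by
  refine lhopital_atTop_atTop (Eventually.of_forall (hasDerivAt_integratingExponent hh))
    (Eventually.of_forall fun s => by simpa using hasDerivAt_pow 2 s)
    ((eventually_gt_atTop 0).mono fun s hs => by positivity)
    (tendsto_pow_atTop two_ne_zero) ?_
  convert (tendsto_deriv_integratingExponent_div (c := c) (A := A) (B := B) hhs).div_const 2
    using 2 with s
  · field_simp
  · ring

end IntegratingExponent

theorem tendsto_exp_mul_log_div_sq_atTop {E : ℝ → ℝ} {c : ℝ} (hc : 0 < c)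
    (hE : Tendsto (fun s => E s / s ^ 2) atTop (𝓝 c)) :
    Tendsto (fun s => exp (E s) * log s / s ^ 2) atTop atTop := by
  have hsq : Tendsto (fun s : ℝ => c / 2 * s ^ 2) atTop atTop :=
    (tendsto_pow_atTop two_ne_zero).const_mul_atTop (by positivity)
  have hlower :
      Tendsto (fun s => c / 2 * (exp (c / 2 * s ^ 2) / (c / 2 * s ^ 2) ^ 1)) atTop atTop :=
    ((tendsto_exp_div_pow_atTop 1).comp hsq).const_mul_atTop (by positivity)
  have hexp : Tendsto (fun s => exp (E s) / s ^ 2) atTop atTop := by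
    refine tendsto_atTop_mono' _ ?_ hlower
    filter_upwards [hE.eventually (lt_mem_nhds (half_lt_self hc)), eventually_ne_atTop 0]
      with s hEs hs
    have hs2 : 0 < s ^ 2 := by positivity
    rw [lt_div_iff₀ hs2] at hEs
    calc c / 2 * (exp (c / 2 * s ^ 2) / (c / 2 * s ^ 2) ^ 1) = exp (c / 2 * s ^ 2) / s ^ 2 := by
          field_simp
      _ ≤ exp (E s) / s ^ 2 := by gcongr
  exact (hexp.atTop_mul_atTop₀ tendsto_log_atTop).congr fun s => div_mul_eq_mul_div _ _ _

theorem hasDerivAt_exp_mul_log_div_sq {E : ℝ → ℝ} {E' s : ℝ} (hE : HasDerivAt E E' s)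
    (hs : 1 < s) :
    HasDerivAt (fun s => exp (E s) * log s / s ^ 2)
      (exp (E s) * (log s / s) * (E' / s + ((log s)⁻¹ - 2) / s ^ 2)) s := by
  have hs0 : s ≠ 0 := by positivity
  have hlog : log s ≠ 0 := (log_pos hs).ne'
  refine ((hE.exp.mul (hasDerivAt_log hs0)).div (hasDerivAt_pow 2 s)
    (pow_ne_zero 2 hs0)).congr_deriv ?_
  simp only [Pi.mul_apply]
  field_simp
  ring

theorem stmt_7_general (c A B a₃ : ℝ) (hc : 0 < c) (h H : ℝ → ℝ) (hh : ContDiff ℝ 2 h)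
    (hhs : Tendsto (fun s => h s / s) atTop (nhds 0))
    (hHdef : ∀ s, H s = deriv (deriv h) s + (2 * c * s + A * h s + B) * deriv h s)
    (hH : Tendsto (fun s => s * H s / Real.log s) atTop (nhds (-a₃))) :
    Tendsto (fun s => s ^ 2 * deriv h s / Real.log s) atTop (nhds (-a₃ / (2 * c))) := by
  have hcont : Continuous h := hh.continuous
  have hdiff : Differentiable ℝ (deriv h) := (hh.deriv' (n := 1)).differentiable one_ne_zero
  set E := integratingExponent c A B h
  have hE : ∀ s, HasDerivAt E (2 * c * s + A * h s + B) s := hasDerivAt_integratingExponent hcont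
  set q : ℝ → ℝ := fun s => (2 * c * s + A * h s + B) / s + ((log s)⁻¹ - 2) / s ^ 2
  have hq : Tendsto q atTop (𝓝 (2 * c)) := by
    simpa using (tendsto_deriv_integratingExponent_div hhs).add
      (((tendsto_inv_atTop_zero.comp tendsto_log_atTop).sub_const 2).div_atTop
        (tendsto_pow_atTop two_ne_zero))
  have hψ : ∀ s, HasDerivAt (fun s => exp (E s) * deriv h s) (exp (E s) * H s) s := fun s => by
    rw [hHdef]
    exact ((hE s).exp.mul (hdiff s).hasDerivAt).congr_deriv (by ring)
  have hratio : Tendsto (fun s => exp (E s) * H s / (exp (E s) * (log s / s) * q s)) atTop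
      (𝓝 (-a₃ / (2 * c))) := by
    refine (hH.div hq (by positivity)).congr' ?_
    filter_upwards [eventually_gt_atTop 1] with s hs
    simp only [Pi.div_apply]
    field_simp
  refine (lhopital_atTop_atTop (Eventually.of_forall hψ)
    ((eventually_gt_atTop 1).mono fun s hs => hasDerivAt_exp_mul_log_div_sq (hE s) hs) ?_
    (tendsto_exp_mul_log_div_sq_atTop hc (tendsto_integratingExponent_div_sq hcont hhs))
    hratio).congr' ?_
  · filter_upwards [eventually_gt_atTop 1, hq.eventually_const_lt (by positivity)] with s hs hqs
    exact mul_pos (mul_pos (exp_pos _) (div_pos (log_pos hs) (by linarith))) hqs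
  · filter_upwards [eventually_gt_atTop 1] with s hs
    field_simp

theorem stmt_7 (c A B a₃ : ℝ) (hc : 0 < c) (h H : ℝ → ℝ) (hh : ContDiff ℝ 2 h)
    (hh' : Tendsto (deriv h) atTop (nhds 0))
    (hhs : Tendsto (fun s => h s / s) atTop (nhds 0))
    (hHdef : ∀ s, H s = deriv (deriv h) s + (2 * c * s + A * h s + B) * deriv h s)
    (hH : Tendsto (fun s => s * H s / Real.log s) atTop (nhds (-a₃))) :
    Tendsto (fun s => s ^ 2 * deriv h s / Real.log s) atTop (nhds (-a₃ / (2 * c))) :=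
  stmt_7_general c A B a₃ hc h H hh hhs hHdef hH
end

section
/- Let c, A, B ∈ ℝ with c > 0, and let h : ℝ → ℝ be C² with h'(s) → 0 and h(s)/s → 0 as s → ∞. Suppose s·H(s) → L as s → ∞, where H(s) := h''(s) + (2cs + A h(s) + B)h'(s). Then s²·h'(s) → L/(2c) as s → ∞. -/
/-!
With `v(s) = s² h'(s)`, the equation defining `H` becomes the linear first-order equation
`v' = s (s H(s) - a(s) v)` with `a(s) = 2c + A h(s)/s + B/s - 2/s² → 2c` and `s H(s) → L`.
For such an equation, once `v` exceeds `L/(2c)` by a fixed margin its derivative is bounded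
away from zero with the sign pulling it back, so `v` is eventually trapped in every
neighbourhood of `L/(2c)`.
-/

open Filter Set Topology

lemma exists_lt_of_hasDerivAt_le_neg_of_le {v v' : ℝ → ℝ} {s₀ θ κ : ℝ} (hκ : 0 < κ)
    (hv : ∀ s, s₀ ≤ s → HasDerivAt v (v' s) s)
    (hdrop : ∀ s, s₀ ≤ s → θ ≤ v s → v' s ≤ -κ) :
    ∃ s₁, s₀ ≤ s₁ ∧ v s₁ < θ := by
  by_contra! hge
  set x := s₀ + (v s₀ - θ) / κ + 1
  have hx : s₀ ≤ x := by
    have : 0 ≤ (v s₀ - θ) / κ := div_nonneg (by linarith [hge s₀ le_rfl]) hκ.le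
    linarith
  have hB : ∀ t, HasDerivAt (fun t => v s₀ - κ * (t - s₀)) (-κ) t := fun t => by
    simpa using (((hasDerivAt_id t).sub_const s₀).const_mul κ).const_sub (v s₀)
  have hlin : v x ≤ v s₀ - κ * (x - s₀) :=
    image_le_of_deriv_right_le_deriv_boundary (f' := v')
      (fun t ht => (hv t ht.1).continuousAt.continuousWithinAt)
      (fun t ht => (hv t ht.1).hasDerivWithinAt) (by simp) (by fun_prop)
      (fun t _ => (hB t).hasDerivWithinAt) (fun t ht => hdrop t ht.1 (hge t ht.1)) ⟨hx, le_rfl⟩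
  have : κ * (x - s₀) = v s₀ - θ + κ := by
    simp only [x]
    field_simp
    ring
  linarith [hge x hx]

lemma eventually_le_of_hasDerivAt_le_neg_of_le {v v' : ℝ → ℝ} {θ κ : ℝ} (hκ : 0 < κ)
    (hv : ∀ᶠ s in atTop, HasDerivAt v (v' s) s)
    (hdrop : ∀ᶠ s in atTop, θ ≤ v s → v' s ≤ -κ) :
    ∀ᶠ s in atTop, v s ≤ θ := by
  obtain ⟨s₀, hs₀⟩ := eventually_atTop.1 (hv.and hdrop)
  obtain ⟨s₁, hs₀₁, hs₁⟩ := exists_lt_of_hasDerivAt_le_neg_of_le hκ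
    (fun s hs => (hs₀ s hs).1) (fun s hs => (hs₀ s hs).2)
  filter_upwards [eventually_ge_atTop s₁] with s hs
  have hder : ∀ t ∈ Ico s₁ s, HasDerivAt v (v' t) t := fun t ht => (hs₀ t (hs₀₁.trans ht.1)).1
  exact image_le_of_deriv_right_lt_deriv_boundary (B := fun _ => θ) (B' := fun _ => 0)
    (fun t ht => (hs₀ t (hs₀₁.trans ht.1)).1.continuousAt.continuousWithinAt)
    (fun t ht => (hder t ht).hasDerivWithinAt) hs₁.le (fun t => hasDerivAt_const t θ)
    (fun t ht hvt => by linarith [(hs₀ t (hs₀₁.trans ht.1)).2 hvt.ge]) ⟨hs, le_rfl⟩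

section LinearODE

variable {v p a b : ℝ → ℝ} {α β : ℝ}

lemma eventually_lt_of_hasDerivAt_eq_mul_sub (hα : 0 < α)
    (hv : ∀ᶠ s in atTop, HasDerivAt v (p s * (b s - a s * v s)) s)
    (hp : ∀ᶠ s in atTop, 1 ≤ p s) (ha : Tendsto a atTop (𝓝 α)) (hb : Tendsto b atTop (𝓝 β))
    {γ : ℝ} (hγ : β / α < γ) :
    ∀ᶠ s in atTop, v s < γ := by
  obtain ⟨θ, hβθ, hθγ⟩ := exists_between hγ
  set d := θ - β / α
  have hd : 0 < d := sub_pos.2 hβθ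
  have hgap : ∀ᶠ s in atTop, b s - a s * (β / α) ≤ α * d / 4 := by
    have : Tendsto (fun s => b s - a s * (β / α)) atTop (𝓝 0) := by
      simpa [mul_div_cancel₀ β hα.ne'] using hb.sub (ha.mul_const (β / α))
    exact this.eventually_le_const (by positivity)
  have hθ : ∀ᶠ s in atTop, v s ≤ θ := by
    refine eventually_le_of_hasDerivAt_le_neg_of_le (κ := α * d / 4) (by positivity) hv ?_
    filter_upwards [hp, hgap, ha.eventually_const_le (half_lt_self hα)] with s hps hgs has hvs
    -- `b - a v = (b - a β/α) - a (v - β/α)` and `a (v - β/α) ≥ (α/2) d`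
    have hinner : b s - a s * v s ≤ -(α * d / 4) := by
      nlinarith [mul_le_mul_of_nonneg_left (sub_le_sub_right hvs (β / α))
        ((half_pos hα).le.trans has), mul_le_mul_of_nonneg_right has hd.le]
    have hneg : -(α * d / 4) ≤ 0 := neg_nonpos.2 (by positivity)
    nlinarith [mul_nonpos_of_nonneg_of_nonpos (sub_nonneg.2 hps) (hinner.trans hneg)]
  filter_upwards [hθ] with s hs
  exact hs.trans_lt hθγ

theorem tendsto_of_hasDerivAt_eq_mul_sub (hα : 0 < α)
    (hv : ∀ᶠ s in atTop, HasDerivAt v (p s * (b s - a s * v s)) s)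
    (hp : ∀ᶠ s in atTop, 1 ≤ p s) (ha : Tendsto a atTop (𝓝 α)) (hb : Tendsto b atTop (𝓝 β)) :
    Tendsto v atTop (𝓝 (β / α)) := by
  refine tendsto_order.2
    ⟨fun γ hγ => ?_, fun γ => eventually_lt_of_hasDerivAt_eq_mul_sub hα hv hp ha hb⟩
  have hv_neg : ∀ᶠ s in atTop, HasDerivAt (-v) (p s * (-b s - a s * (-v) s)) s := by
    filter_upwards [hv] with s hs
    refine hs.neg.congr_deriv ?_
    simp only [Pi.neg_apply]
    ring
  filter_upwards [eventually_lt_of_hasDerivAt_eq_mul_sub hα hv_neg hp ha hb.neg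
    (by rwa [neg_div, neg_lt_neg_iff] : -β / α < -γ)] with s hs
  exact neg_lt_neg_iff.1 hs

end LinearODE

theorem stmt_8_general (c A B L : ℝ) (hc : 0 < c) (h H : ℝ → ℝ) (hh : ContDiff ℝ 2 h)
    (hhs : Tendsto (fun s => h s / s) atTop (nhds 0))
    (hHdef : ∀ s, H s = deriv (deriv h) s + (2 * c * s + A * h s + B) * deriv h s)
    (hH : Tendsto (fun s => s * H s) atTop (nhds L)) :
    Tendsto (fun s => s ^ 2 * deriv h s) atTop (nhds (L / (2 * c))) := by
  have ha : Tendsto (fun s => 2 * c + A * (h s / s) + B * s⁻¹ - 2 * (s ^ 2)⁻¹) atTop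
      (𝓝 (2 * c)) := by
    simpa using ((tendsto_const_nhds.add (hhs.const_mul A)).add
      (tendsto_inv_atTop_zero.const_mul B)).sub
      ((tendsto_inv_atTop_zero.comp (tendsto_pow_atTop two_ne_zero)).const_mul 2)
  refine tendsto_of_hasDerivAt_eq_mul_sub (p := id) (by positivity) ?_
    (eventually_ge_atTop 1) ha hH
  filter_upwards [eventually_ne_atTop 0] with s hs
  refine ((hasDerivAt_pow 2 s).mul (hh.differentiable_deriv_two s).hasDerivAt).congr_deriv ?_
  rw [id, hHdef]
  field_simp
  ring

theorem stmt_8 (c A B L : ℝ) (hc : 0 < c) (h H : ℝ → ℝ) (hh : ContDiff ℝ 2 h)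
    (hh' : Tendsto (deriv h) atTop (nhds 0))
    (hhs : Tendsto (fun s => h s / s) atTop (nhds 0))
    (hHdef : ∀ s, H s = deriv (deriv h) s + (2 * c * s + A * h s + B) * deriv h s)
    (hH : Tendsto (fun s => s * H s) atTop (nhds L)) :
    Tendsto (fun s => s ^ 2 * deriv h s) atTop (nhds (L / (2 * c))) :=
  stmt_8_general c A B L hc h H hh hhs hHdef hH
end

section
/- Let h₁ : ℝ → ℝ be C¹ and suppose s²·h₁'(s)/log s → −L as s → ∞ for some L > 0. Then the limit K := lim_{s→∞} h₁(s) exists in ℝ, and moreover h₁(s) = K + L·(1 + log s)/s + o((1 + log s)/s) as s → ∞. -/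
/-! The hypothesis says h₁'(s) = O(log s / s²), which is integrable at infinity, so h₁ has a
limit K. Both h₁ - K and g(s) = (1 + log s) / s tend to 0, and g'(s) = -log s / s², so
L'Hôpital's rule gives (h₁ - K) / g → L, which is the expansion. -/

open Filter Real MeasureTheory Set Asymptotics Topology

theorem exists_tendsto_atTop_of_integrableAtFilter_deriv {E : Type*} [NormedAddCommGroup E]
    [NormedSpace ℝ E] [CompleteSpace E] {f : ℝ → E} (hf : Differentiable ℝ f)
    (hf' : IntegrableAtFilter (deriv f) atTop) : ∃ K, Tendsto f atTop (𝓝 K) := by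
  obtain ⟨a, ha⟩ := integrableAtFilter_atTop_iff.1 hf'
  exact ⟨_, tendsto_limUnder_of_hasDerivAt_of_integrableOn_Ioi (fun x _ => (hf x).hasDerivAt)
    (ha.mono_set Ioi_subset_Ici_self)⟩

theorem isBigO_log_div_sq_rpow_atTop :
    (fun s : ℝ => log s / s ^ 2) =O[atTop] fun s => s ^ (-(3 / 2 : ℝ)) := by
  have hlog := (isLittleO_log_rpow_atTop (show (0 : ℝ) < 1 / 2 by norm_num)).isBigO
  refine (hlog.mul (isBigO_refl (fun s : ℝ => (s ^ 2)⁻¹) atTop)).congr' ?_ ?_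
  · exact Eventually.of_forall fun s => (div_eq_mul_inv _ _).symm
  · filter_upwards [eventually_gt_atTop 0] with s hs
    rw [← rpow_natCast, ← rpow_neg hs.le, ← rpow_add hs]
    norm_num

theorem integrableAtFilter_log_div_sq_atTop :
    IntegrableAtFilter (fun s : ℝ => log s / s ^ 2) atTop := by
  have hmeas : Measurable fun s : ℝ => log s / s ^ 2 := by fun_prop
  exact isBigO_log_div_sq_rpow_atTop.integrableAtFilter
    hmeas.aestronglyMeasurable.stronglyMeasurableAtFilter
    (integrableAtFilter_rpow_atTop_iff.2 (by norm_num))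

theorem hasDerivAt_one_add_log_div {s : ℝ} (hs : s ≠ 0) :
    HasDerivAt (fun x => (1 + log x) / x) (-log s / s ^ 2) s := by
  refine (((hasDerivAt_log hs).const_add 1).div (hasDerivAt_id' s) hs).congr_deriv ?_
  field_simp
  ring

theorem tendsto_one_add_log_div_atTop : Tendsto (fun s : ℝ => (1 + log s) / s) atTop (𝓝 0) := by
  simpa [add_div] using tendsto_inv_atTop_zero.add isLittleO_log_id_atTop.tendsto_div_nhds_zero

theorem isLittleO_sub_mul_of_tendsto_div {α 𝕜 : Type*} [NormedField 𝕜] {l : Filter α}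
    {f g : α → 𝕜} {c : 𝕜} (h : Tendsto (fun x => f x / g x) l (𝓝 c)) (hg : ∀ᶠ x in l, g x ≠ 0) :
    (fun x => f x - c * g x) =o[l] g := by
  rw [isLittleO_iff_tendsto' (hg.mono fun x hx h0 => absurd h0 hx)]
  refine (tendsto_sub_nhds_zero_iff.2 h).congr' ?_
  filter_upwards [hg] with x hx
  rw [sub_div, mul_div_cancel_right₀ _ hx]

theorem stmt_9_general (h₁ : ℝ → ℝ) (hh₁ : ContDiff ℝ 1 h₁) (L : ℝ)
    (hlim : Tendsto (fun s => s ^ 2 * deriv h₁ s / Real.log s) atTop (nhds (-L))) :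
    ∃ K : ℝ, Tendsto h₁ atTop (nhds K) ∧
      (fun s => h₁ s - K - L * ((1 + Real.log s) / s)) =o[atTop]
        (fun s => (1 + Real.log s) / s) := by
  have hdiff : Differentiable ℝ h₁ := hh₁.differentiable one_ne_zero
  have hpos : ∀ᶠ s : ℝ in atTop, 0 < s ∧ 0 < log s :=
    (eventually_gt_atTop 1).mono fun s hs => ⟨one_pos.trans hs, log_pos hs⟩
  have hquot : Tendsto (fun s => deriv h₁ s / (log s / s ^ 2)) atTop (𝓝 (-L)) := by
    simpa only [div_div_eq_mul_div, mul_comm] using hlim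
  have hderiv : deriv h₁ =O[atTop] fun s => log s / s ^ 2 :=
    isBigO_of_div_tendsto_nhds (hpos.mono fun s ⟨hs, hls⟩ h0 => absurd h0 (by positivity)) _ hquot
  obtain ⟨K, hK⟩ := exists_tendsto_atTop_of_integrableAtFilter_deriv hdiff <|
    hderiv.integrableAtFilter (stronglyMeasurable_deriv h₁).stronglyMeasurableAtFilter
      integrableAtFilter_log_div_sq_atTop
  refine ⟨K, hK, isLittleO_sub_mul_of_tendsto_div ?_ ?_⟩
  · refine HasDerivAt.lhopital_zero_atTop
      (Eventually.of_forall fun s => (hdiff s).hasDerivAt.sub_const K)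
      ((eventually_ne_atTop 0).mono fun s => hasDerivAt_one_add_log_div)
      (hpos.mono fun s ⟨hs, hls⟩ => ?_) (tendsto_sub_nhds_zero_iff.2 hK)
      tendsto_one_add_log_div_atTop
      (by simpa only [neg_div, div_neg, neg_neg] using hquot.neg)
    exact div_ne_zero (neg_ne_zero.2 hls.ne') (by positivity)
  · filter_upwards [hpos] with s ⟨hs, hls⟩
    positivity

theorem stmt_9 (h₁ : ℝ → ℝ) (hh₁ : ContDiff ℝ 1 h₁) (L : ℝ) (hL : 0 < L)
    (hlim : Tendsto (fun s => s ^ 2 * deriv h₁ s / Real.log s) atTop (nhds (-L))) :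
    ∃ K : ℝ, Tendsto h₁ atTop (nhds K) ∧
      (fun s => h₁ s - K - L * ((1 + Real.log s) / s)) =o[atTop]
        (fun s => (1 + Real.log s) / s) :=
  stmt_9_general h₁ hh₁ L hlim
end

section
/- Let n ≥ 3, 0 < m < (n-2)/n, m ≠ (n-2)/(n+2), β > 0. Suppose h : ℝ → ℝ is C² and satisfies h'' + (2(n-2-nm)/(1-m)·s + (β/(n-1))h + (n-2-(n+2)m)/(1-m))·h' = G(s) − b₀, where G(s) → 0 as s → ∞, b₀ = 2(n-1)(n-2-nm)(n-2-(n+2)m)/((1-m)²β), and h'(s) → 0, h(s)/s → 0 as s → ∞. Then h(s)/log s → −(n-1)(n-2-(n+2)m)/((1-m)β) and s·h'(s) → −(n-1)(n-2-(n+2)m)/((1-m)β) as s → ∞. -/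
open Filter Real Set

/-! The function `w(s) = s h'(s)` satisfies `w' = f - p (w - L)`, where the damping
`p(s) = a s + k h(s) + c` grows linearly and the forcing `f = h' + s G - (k h + c) L` is `o(s)`;
the value of `b₀` is exactly what makes `L` the equilibrium. A barrier argument traps `w`
in every neighbourhood of `L`: above `L + ε` it decreases at a rate bounded below, and it cannot
cross back. Finally `s h'(s) → L` gives `h(s) / log s → L`: after substituting `s = exp t`, this
says that a function whose derivative tends to `L` grows like `L t`. -/

theorem eventually_nonpos_of_deriv_le_neg {w w' : ℝ → ℝ} {S c : ℝ} (hc : 0 < c)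
    (hw : ∀ x ≥ S, HasDerivAt w (w' x) x) (hd : ∀ x ≥ S, 0 ≤ w x → w' x ≤ -c) :
    ∀ᶠ x in atTop, w x ≤ 0 := by
  have hcont : ∀ b, ContinuousOn w (Icc S b) := fun b x hx =>
    (hw x hx.1).continuousAt.continuousWithinAt
  have hderiv : ∀ b, ∀ x ∈ Ico S b, HasDerivWithinAt w (w' x) (Ici x) x :=
    fun b x hx => (hw x hx.1).hasDerivWithinAt
  -- While `w` stays positive it decreases at rate `c`, so it reaches `0` by time `S + w S / c`.
  obtain ⟨x₀, hx₀S, hx₀⟩ : ∃ x₀ ≥ S, w x₀ ≤ 0 := by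
    by_contra! hpos
    set b := S + w S / c
    have hSb : S ≤ b := le_add_of_nonneg_right (div_nonneg (hpos S le_rfl).le hc.le)
    have hline : ∀ x, HasDerivAt (fun x => w S - c * (x - S)) (-c) x := fun x =>
      (((hasDerivAt_id x).sub_const S).const_mul c).const_sub (w S) |>.congr_deriv (by ring)
    have hdecay : w b ≤ w S - c * (b - S) :=
      image_le_of_deriv_right_le_deriv_boundary (hcont b) (hderiv b) (by simp) (by fun_prop)
        (fun x _ => (hline x).hasDerivWithinAt) (fun x hx => hd x hx.1 (hpos x hx.1).le)
        (right_mem_Icc.2 hSb)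
    have hcb : c * (b - S) = w S := by
      simp only [b, add_sub_cancel_left, mul_div_cancel₀ _ hc.ne']
    linarith [hpos b hSb]
  filter_upwards [eventually_ge_atTop x₀] with b hb
  exact image_le_of_deriv_right_lt_deriv_boundary ((hcont b).mono (Icc_subset_Icc_left hx₀S))
    (fun x hx => hderiv b x ⟨hx₀S.trans hx.1, hx.2⟩) hx₀
    (fun _ => hasDerivAt_const _ (0 : ℝ))
    (fun x hx hx0 => (hd x (hx₀S.trans hx.1) hx0.ge).trans_lt (neg_lt_zero.2 hc))
    (right_mem_Icc.2 hb)

section Damping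

variable {w f p : ℝ → ℝ} {L : ℝ}

theorem eventually_lt_of_hasDerivAt_sub_mul_sub
    (hw : ∀ᶠ s in atTop, HasDerivAt w (f s - p s * (w s - L)) s)
    (hp : Tendsto p atTop atTop) (hf : Tendsto (fun s => f s / p s) atTop (nhds 0))
    {b : ℝ} (hb : L < b) : ∀ᶠ s in atTop, w s < b := by
  set ε := (b - L) / 2 with hε
  have hε0 : 0 < ε := by linarith
  obtain ⟨S, hS⟩ := eventually_atTop.1 <| hw.and <| (hp.eventually_ge_atTop (2 / ε)).and <|
    (hp.eventually_gt_atTop 0).and <| hf.eventually (ge_mem_nhds (half_pos hε0))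
  have hbarrier := eventually_nonpos_of_deriv_le_neg one_pos (w := fun s => w s - (L + ε))
    (fun s hs => (hS s hs).1.sub_const _) fun s hs hws => by
      obtain ⟨-, hp2, hp0, hfp⟩ := hS s hs
      rw [div_le_iff₀ hp0] at hfp
      rw [div_le_iff₀ hε0] at hp2
      nlinarith
  filter_upwards [hbarrier] with s hs
  linarith

theorem tendsto_of_hasDerivAt_sub_mul_sub
    (hw : ∀ᶠ s in atTop, HasDerivAt w (f s - p s * (w s - L)) s)
    (hp : Tendsto p atTop atTop) (hf : Tendsto (fun s => f s / p s) atTop (nhds 0)) :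
    Tendsto w atTop (nhds L) := by
  refine tendsto_order.2
    ⟨fun a ha => ?_, fun b hb => eventually_lt_of_hasDerivAt_sub_mul_sub hw hp hf hb⟩
  have hw' : ∀ᶠ s in atTop, HasDerivAt (fun s => -w s) (-f s - p s * (-w s - -L)) s := by
    filter_upwards [hw] with s hs
    exact hs.neg.congr_deriv (by ring)
  have hf' : Tendsto (fun s => -f s / p s) atTop (nhds 0) := by
    simpa only [neg_div, neg_zero] using hf.neg
  filter_upwards [eventually_lt_of_hasDerivAt_sub_mul_sub hw' hp hf' (neg_lt_neg ha)] with s hs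
  exact neg_lt_neg_iff.1 hs

end Damping

theorem tendsto_mul_of_hasDerivAt_add_mul_eq {y y' q G : ℝ → ℝ} {a L : ℝ} (ha : 0 < a)
    (hy : ∀ᶠ s in atTop, HasDerivAt y (y' s) s)
    (hode : ∀ᶠ s in atTop, y' s + (a * s + q s) * y s = G s + a * L)
    (hq : Tendsto (fun s => q s / s) atTop (nhds 0)) (hG : Tendsto G atTop (nhds 0))
    (hy0 : Tendsto y atTop (nhds 0)) :
    Tendsto (fun s => s * y s) atTop (nhds L) := by
  -- `w = s y` satisfies `w' = f - p (w - L)` with damping `p ~ a s` and forcing `f = o(s)`.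
  have hps : Tendsto (fun s => a + q s / s) atTop (nhds a) := by
    simpa using hq.const_add a
  have hfs : Tendsto (fun s => y s / s + G s - q s / s * L) atTop (nhds 0) := by
    simpa using ((hy0.div_atTop tendsto_id).add hG).sub (hq.mul_const L)
  refine tendsto_of_hasDerivAt_sub_mul_sub (f := fun s => y s + s * G s - q s * L)
    (p := fun s => a * s + q s) ?_ ?_ ?_
  · filter_upwards [hy, hode] with s hys hodes
    refine ((hasDerivAt_id' s).mul hys).congr_deriv ?_
    linear_combination s * hodes
  · refine (tendsto_id.atTop_mul_pos ha hps).congr' ?_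
    filter_upwards [eventually_ne_atTop 0] with s hs
    simp only [id]
    field_simp
  · refine (zero_div a ▸ hfs.div hps ha.ne').congr' ?_
    filter_upwards [eventually_ne_atTop 0] with s hs
    simp only [Pi.div_apply]
    rw [eq_comm, ← div_div_div_cancel_right₀ hs]
    congr 1 <;> field_simp

theorem isLittleO_id_of_hasDerivAt_tendsto_zero {u u' : ℝ → ℝ}
    (hu : ∀ᶠ t in atTop, HasDerivAt u (u' t) t) (hu' : Tendsto u' atTop (nhds 0)) :
    u =o[atTop] id := by
  refine Asymptotics.IsLittleO.of_bound fun c hc => ?_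
  obtain ⟨T, hT⟩ := eventually_atTop.1 <| hu.and <| (eventually_ge_atTop 0).and <|
    hu'.norm.eventually (ge_mem_nhds (show ‖(0 : ℝ)‖ < c / 2 by simpa using hc))
  have hmvt : ∀ t ≥ T, ‖u t - u T‖ ≤ c / 2 * ‖t - T‖ := fun t ht =>
    (convex_Ici T).norm_image_sub_le_of_norm_hasDerivWithin_le
      (fun x hx => (hT x hx).1.hasDerivWithinAt) (fun x hx => (hT x hx).2.2) self_mem_Ici ht
  filter_upwards [eventually_ge_atTop T, eventually_ge_atTop (2 * ‖u T‖ / c)] with t htT htu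
  have ht0 : 0 ≤ t := (hT T le_rfl).2.1.trans htT
  rw [div_le_iff₀ hc] at htu
  calc ‖u t‖ ≤ ‖u T‖ + ‖u t - u T‖ := norm_le_norm_add_norm_sub' _ _
    _ ≤ c / 2 * t + c / 2 * t := by
      gcongr
      · linarith
      · refine (hmvt t htT).trans ?_
        rw [Real.norm_of_nonneg (sub_nonneg.2 htT)]
        nlinarith [(hT T le_rfl).2.1]
    _ = c * ‖id t‖ := by rw [id, Real.norm_of_nonneg ht0]; ring

theorem tendsto_div_self_of_hasDerivAt_tendsto {v v' : ℝ → ℝ} {L : ℝ}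
    (hv : ∀ᶠ t in atTop, HasDerivAt v (v' t) t) (hv' : Tendsto v' atTop (nhds L)) :
    Tendsto (fun t => v t / t) atTop (nhds L) := by
  have ho : (fun t => v t - L * t) =o[atTop] id := by
    refine isLittleO_id_of_hasDerivAt_tendsto_zero (u' := fun t => v' t - L) ?_ ?_
    · filter_upwards [hv] with t ht
      simpa using ht.fun_sub ((hasDerivAt_id' t).const_mul L)
    · simpa using hv'.sub_const L
  refine (zero_add L ▸ ho.tendsto_div_nhds_zero.add_const L).congr' ?_
  filter_upwards [eventually_ne_atTop 0] with t ht
  simp only [id]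
  field_simp
  ring

theorem tendsto_div_log_of_tendsto_mul_deriv {h h' : ℝ → ℝ} {L : ℝ}
    (hh : ∀ᶠ s in atTop, HasDerivAt h (h' s) s)
    (hL : Tendsto (fun s => s * h' s) atTop (nhds L)) :
    Tendsto (fun s => h s / Real.log s) atTop (nhds L) := by
  -- Substitute `s = exp t`: the derivative of `h ∘ exp` is `s h'(s)`.
  have hexp : Tendsto (fun t => h (exp t) / t) atTop (nhds L) := by
    refine tendsto_div_self_of_hasDerivAt_tendsto (v' := fun t => exp t * h' (exp t)) ?_
      (hL.comp tendsto_exp_atTop)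
    filter_upwards [tendsto_exp_atTop.eventually hh] with t ht
    simpa [Function.comp_def, mul_comm] using ht.comp t (hasDerivAt_exp t)
  refine (hexp.comp tendsto_log_atTop).congr' ?_
  filter_upwards [eventually_gt_atTop 0] with s hs
  simp [exp_log hs]

theorem stmt_12_general (n : ℕ) (hn : 3 ≤ n) (m β : ℝ) (hm2 : m < ((n : ℝ) - 2) / n)
    (h G : ℝ → ℝ) (hh : ContDiff ℝ 2 h)
    (hG : Tendsto G atTop (nhds 0))
    (b₀ : ℝ)
    (hb₀ : b₀ = 2 * ((n : ℝ) - 1) * ((n : ℝ) - 2 - n * m) * ((n : ℝ) - 2 - (n + 2) * m)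
      / ((1 - m) ^ 2 * β))
    (hode : ∀ s, deriv (deriv h) s
      + (2 * ((n : ℝ) - 2 - n * m) / (1 - m) * s + (β / ((n : ℝ) - 1)) * h s
         + ((n : ℝ) - 2 - (n + 2) * m) / (1 - m)) * deriv h s = G s - b₀)
    (hh' : Tendsto (deriv h) atTop (nhds 0))
    (hhs : Tendsto (fun s => h s / s) atTop (nhds 0)) :
    Tendsto (fun s => h s / Real.log s) atTop
        (nhds (-(((n : ℝ) - 1) * ((n : ℝ) - 2 - (n + 2) * m)) / ((1 - m) * β))) ∧
      Tendsto (fun s => s * deriv h s) atTop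
        (nhds (-(((n : ℝ) - 1) * ((n : ℝ) - 2 - (n + 2) * m)) / ((1 - m) * β))) := by
  set a := 2 * ((n : ℝ) - 2 - n * m) / (1 - m)
  set k := β / ((n : ℝ) - 1)
  set c := ((n : ℝ) - 2 - (n + 2) * m) / (1 - m)
  set L := -(((n : ℝ) - 1) * ((n : ℝ) - 2 - (n + 2) * m)) / ((1 - m) * β)
  have hn0 : (0 : ℝ) < n := by positivity
  have ha : 0 < a := by
    have hm1 : m < 1 := hm2.trans ((div_lt_one hn0).2 (by linarith))
    have hnm : (n : ℝ) * m < n - 2 := by rwa [lt_div_iff₀ hn0, mul_comm] at hm2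
    exact div_pos (by linarith) (by linarith)
  have hb : b₀ = -(a * L) := by
    simp only [hb₀, a, L]
    -- with `1 - m` an atom, `ring` can split `((1 - m) ^ 2 * β)⁻¹`
    generalize 1 - m = r
    ring
  have hq : Tendsto (fun s => (k * h s + c) / s) atTop (nhds 0) := by
    simpa only [add_div, mul_div_assoc, mul_zero, add_zero, id] using
      (hhs.const_mul k).add (tendsto_const_nhds.div_atTop tendsto_id)
  have hderiv : ∀ s, HasDerivAt (deriv h) (deriv (deriv h) s) s := fun s =>
    (hh.differentiable_deriv_two s).hasDerivAt
  have hmul := tendsto_mul_of_hasDerivAt_add_mul_eq (q := fun s => k * h s + c) (L := L) ha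
    (.of_forall hderiv) (.of_forall fun s => by rw [← add_assoc, hode, hb]; ring) hq hG hh'
  exact ⟨tendsto_div_log_of_tendsto_mul_deriv
    (.of_forall fun s => (hh.differentiable two_ne_zero s).hasDerivAt) hmul, hmul⟩

theorem stmt_12 (n : ℕ) (hn : 3 ≤ n) (m β : ℝ) (hm : 0 < m) (hm2 : m < ((n : ℝ) - 2) / n)
    (hm3 : m ≠ ((n : ℝ) - 2) / (n + 2)) (hβ : 0 < β)
    (h G : ℝ → ℝ) (hh : ContDiff ℝ 2 h)
    (hG : Tendsto G atTop (nhds 0))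
    (b₀ : ℝ)
    (hb₀ : b₀ = 2 * ((n : ℝ) - 1) * ((n : ℝ) - 2 - n * m) * ((n : ℝ) - 2 - (n + 2) * m)
      / ((1 - m) ^ 2 * β))
    (hode : ∀ s, deriv (deriv h) s
      + (2 * ((n : ℝ) - 2 - n * m) / (1 - m) * s + (β / ((n : ℝ) - 1)) * h s
         + ((n : ℝ) - 2 - (n + 2) * m) / (1 - m)) * deriv h s = G s - b₀)
    (hh' : Tendsto (deriv h) atTop (nhds 0))
    (hhs : Tendsto (fun s => h s / s) atTop (nhds 0)) :
    Tendsto (fun s => h s / Real.log s) atTop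
        (nhds (-(((n : ℝ) - 1) * ((n : ℝ) - 2 - (n + 2) * m)) / ((1 - m) * β))) ∧
      Tendsto (fun s => s * deriv h s) atTop
        (nhds (-(((n : ℝ) - 1) * ((n : ℝ) - 2 - (n + 2) * m)) / ((1 - m) * β))) :=
  stmt_12_general n hn m β hm2 h G hh hG b₀ hb₀ hode hh' hhs
end

section
/- Let c > 0, A, B ∈ ℝ and suppose h : ℝ → ℝ is C², h'(s) → 0 and h(s)/s → 0 as s → ∞, and h satisfies the two-sided differential inequality (a₄−ε)/s ≤ h'' + (2cs + A h + B)h' ≤ (a₄+ε)/s for all s ≥ s₁, for some a₄ ∈ ℝ, ε > 0, s₁ > 0. Then for all sufficiently large s, (a₄−ε)/(2c) − δ(s) ≤ s² h'(s) ≤ (a₄+ε)/(2c) + δ(s) where δ(s) → 0 as s → ∞. -/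
open Filter Set Topology

/-!
Put `x(s) = s² h'(s)`. The differential inequality for `h` becomes
`s ((a₄ - ε) - ρ x) ≤ x' ≤ s ((a₄ + ε) - ρ x)` with the rate `ρ(s) = (2cs + A h(s) + B)/s - 2/s² → 2c`.
Above the level `(a₄ + ε)/(2c) + δ` the upper bound is eventually `≤ -cδ s`, so `x` must drop
below that level and can never cross it upwards again; the lower bound is the same argument
applied to `-x`.
-/

lemma eventually_le_of_deriv_le_neg {φ : ℝ → ℝ} (hφ : Differentiable ℝ φ) {M K : ℝ}
    (hK : 0 < K) (H : ∀ᶠ s in atTop, M ≤ φ s → deriv φ s ≤ -K) :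
    ∀ᶠ t in atTop, φ t ≤ M := by
  obtain ⟨a, ha⟩ := eventually_atTop.mp H
  obtain ⟨t₀, ht₀a, ht₀⟩ : ∃ t₀, a ≤ t₀ ∧ φ t₀ ≤ M := by
    by_contra! hgt
    set t := a + (φ a - M) / K + 1 with ht
    have hat : a ≤ t := by
      have := div_pos (sub_pos.2 (hgt a le_rfl)) hK
      linarith
    have hdrop := (convex_Ici a).image_sub_le_mul_sub_of_deriv_le hφ.continuous.continuousOn
      hφ.differentiableOn (fun s hs => ha s (interior_subset hs) (hgt s (interior_subset hs)).le)
      a self_mem_Ici t hat hat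
    have hKt : -K * (t - a) = -(φ a - M) - K := by rw [ht]; field_simp; ring
    linarith [hgt t hat]
  filter_upwards [eventually_ge_atTop t₀] with t ht
  exact image_le_of_deriv_right_lt_deriv_boundary' (B := fun _ => M) (B' := fun _ => 0)
    hφ.continuous.continuousOn (fun s _ => (hφ s).hasDerivAt.hasDerivWithinAt) ht₀
    continuousOn_const (fun _ _ => hasDerivWithinAt_const _ _ _)
    (fun s hs hφs => by linarith [ha s (ht₀a.trans hs.1) hφs.ge]) ⟨ht, le_rfl⟩

section Comparison

variable {x ρ : ℝ → ℝ} {a κ δ : ℝ}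

lemma eventually_le_div_add_of_deriv_le (hx : Differentiable ℝ x)
    (hρ : Tendsto ρ atTop (𝓝 κ)) (hκ : 0 < κ) (hδ : 0 < δ)
    (hode : ∀ᶠ s in atTop, deriv x s ≤ s * (a - ρ s * x s)) :
    ∀ᶠ s in atTop, x s ≤ a / κ + δ := by
  set M := a / κ + δ
  have hκδ : 0 < κ * δ / 2 := by positivity
  have hgap : a - κ * M < -(κ * δ / 2) := by
    have : a - κ * M = -(κ * δ) := by simp only [M]; field_simp; ring
    linarith
  have hρM : ∀ᶠ s in atTop, a - ρ s * M < -(κ * δ / 2) :=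
    (tendsto_const_nhds.sub (hρ.mul_const M)).eventually (gt_mem_nhds hgap)
  refine eventually_le_of_deriv_le_neg hx hκδ ?_
  filter_upwards [hode, hρM, hρ.eventually (lt_mem_nhds hκ), eventually_ge_atTop 1]
    with s hs hsM hρs hs1 hMx
  calc deriv x s ≤ s * (a - ρ s * x s) := hs
    _ ≤ s * (a - ρ s * M) := by gcongr
    _ ≤ s * -(κ * δ / 2) := by gcongr
    _ ≤ -(κ * δ / 2) := by nlinarith

lemma eventually_div_sub_le_of_le_deriv (hx : Differentiable ℝ x)
    (hρ : Tendsto ρ atTop (𝓝 κ)) (hκ : 0 < κ) (hδ : 0 < δ)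
    (hode : ∀ᶠ s in atTop, s * (a - ρ s * x s) ≤ deriv x s) :
    ∀ᶠ s in atTop, a / κ - δ ≤ x s := by
  have hneg : ∀ᶠ s in atTop, deriv (-x) s ≤ s * (-a - ρ s * (-x) s) := by
    filter_upwards [hode] with s hs
    rw [deriv.neg, Pi.neg_apply]
    linarith
  filter_upwards [eventually_le_div_add_of_deriv_le hx.neg hρ hκ hδ hneg] with s hs
  rw [Pi.neg_apply, neg_div] at hs
  linarith

end Comparison

lemma exists_tendsto_zero_of_eventually_le {α : Type*} {l : Filter α} {f : α → ℝ} {L U : ℝ}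
    (hlo : ∀ δ > 0, ∀ᶠ s in l, L - δ ≤ f s) (hhi : ∀ δ > 0, ∀ᶠ s in l, f s ≤ U + δ) :
    ∃ δ : α → ℝ, Tendsto δ l (𝓝 0) ∧ ∀ s, L - δ s ≤ f s ∧ f s ≤ U + δ s := by
  refine ⟨fun s => max (max (L - f s) (f s - U)) 0, tendsto_order.2 ⟨?_, ?_⟩, fun s => ?_⟩
  · exact fun b hb => Eventually.of_forall fun s => hb.trans_le (le_max_right _ _)
  · intro b hb
    filter_upwards [hlo (b / 2) (half_pos hb), hhi (b / 2) (half_pos hb)] with s hL hU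
    exact max_lt (max_lt (by linarith) (by linarith)) hb
  · constructor <;> linarith [le_max_left (L - f s) (f s - U), le_max_right (L - f s) (f s - U),
      le_max_left (max (L - f s) (f s - U)) 0]

lemma deriv_sq_mul_deriv {h : ℝ → ℝ} {s : ℝ} (hd : DifferentiableAt ℝ (deriv h) s) (hs : s ≠ 0)
    (q : ℝ) :
    deriv (fun t => t ^ 2 * deriv h t) s =
      s * (s * (deriv (deriv h) s + q * deriv h s) - (q / s - 2 / s ^ 2) * (s ^ 2 * deriv h s)) := by
  have hsq : HasDerivAt (fun t : ℝ => t ^ 2) (2 * s) s := by simpa using hasDerivAt_pow 2 s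
  rw [(hsq.fun_mul hd.hasDerivAt).deriv]
  field_simp
  ring

lemma tendsto_rate {h : ℝ → ℝ} (hhs : Tendsto (fun s => h s / s) atTop (𝓝 0)) (c A B : ℝ) :
    Tendsto (fun s => (2 * c * s + A * h s + B) / s - 2 / s ^ 2) atTop (𝓝 (2 * c)) := by
  have hlim : Tendsto (fun s => 2 * c + A * (h s / s) + B * s⁻¹ - 2 * s⁻¹ ^ 2) atTop
      (𝓝 (2 * c + A * 0 + B * 0 - 2 * 0 ^ 2)) :=
    ((tendsto_const_nhds.add (hhs.const_mul A)).add (tendsto_inv_atTop_zero.const_mul B)).sub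
      ((tendsto_inv_atTop_zero.pow 2).const_mul 2)
  refine (by simpa using hlim : Tendsto _ atTop (𝓝 (2 * c))).congr' ?_
  filter_upwards [eventually_ne_atTop 0] with s hs
  field_simp

theorem stmt_15_general (c A B a₄ ε s₁ : ℝ) (hc : 0 < c)
    (h : ℝ → ℝ) (hh : ContDiff ℝ 2 h)
    (hhs : Tendsto (fun s => h s / s) atTop (nhds 0))
    (hineq : ∀ s, s₁ ≤ s →
      (a₄ - ε) / s ≤ deriv (deriv h) s + (2 * c * s + A * h s + B) * deriv h s ∧
      deriv (deriv h) s + (2 * c * s + A * h s + B) * deriv h s ≤ (a₄ + ε) / s) :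
    ∃ δ : ℝ → ℝ, Tendsto δ atTop (nhds 0) ∧
      ∀ᶠ s in atTop,
        (a₄ - ε) / (2 * c) - δ s ≤ s ^ 2 * deriv h s ∧
        s ^ 2 * deriv h s ≤ (a₄ + ε) / (2 * c) + δ s := by
  let x := fun s => s ^ 2 * deriv h s
  let ρ := fun s => (2 * c * s + A * h s + B) / s - 2 / s ^ 2
  have hd : Differentiable ℝ (deriv h) := hh.differentiable_deriv_two
  have hx : Differentiable ℝ x := (differentiable_pow 2).mul hd
  have hode : ∀ᶠ s in atTop,
      s * ((a₄ - ε) - ρ s * x s) ≤ deriv x s ∧ deriv x s ≤ s * ((a₄ + ε) - ρ s * x s) := by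
    filter_upwards [eventually_ge_atTop s₁, eventually_gt_atTop 0] with s hs₁ hs
    rw [deriv_sq_mul_deriv (hd s) hs.ne']
    obtain ⟨hlo, hhi⟩ := hineq s hs₁
    constructor <;> gcongr
    exacts [(div_le_iff₀' hs).1 hlo, (le_div_iff₀' hs).1 hhi]
  have hρ : Tendsto ρ atTop (𝓝 (2 * c)) := tendsto_rate hhs c A B
  obtain ⟨δ, hδ, hbounds⟩ := exists_tendsto_zero_of_eventually_le
    (fun δ hδ => eventually_div_sub_le_of_le_deriv hx hρ (by positivity) hδ
      (hode.mono fun _ => And.left))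
    (fun δ hδ => eventually_le_div_add_of_deriv_le hx hρ (by positivity) hδ
      (hode.mono fun _ => And.right))
  exact ⟨δ, hδ, Eventually.of_forall hbounds⟩

theorem stmt_15 (c A B a₄ ε s₁ : ℝ) (hc : 0 < c) (hε : 0 < ε) (hs₁ : 0 < s₁)
    (h : ℝ → ℝ) (hh : ContDiff ℝ 2 h)
    (hh' : Tendsto (deriv h) atTop (nhds 0))
    (hhs : Tendsto (fun s => h s / s) atTop (nhds 0))
    (hineq : ∀ s, s₁ ≤ s →
      (a₄ - ε) / s ≤ deriv (deriv h) s + (2 * c * s + A * h s + B) * deriv h s ∧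
      deriv (deriv h) s + (2 * c * s + A * h s + B) * deriv h s ≤ (a₄ + ε) / s) :
    ∃ δ : ℝ → ℝ, Tendsto δ atTop (nhds 0) ∧
      ∀ᶠ s in atTop,
        (a₄ - ε) / (2 * c) - δ s ≤ s ^ 2 * deriv h s ∧
        s ^ 2 * deriv h s ≤ (a₄ + ε) / (2 * c) + δ s :=
  stmt_15_general c A B a₄ ε s₁ hc h hh hhs hineq
end

section
/- Let a > 0, and let b be differentiable with b'(s)/s → 0 as s → ∞. Set f(s) = exp(a s² + b(s)). Then for any fixed s₁ > 1, ∫_{s₁}^s (log z / z) f(z) dz / (f(s) log s) → 0 as s → ∞. -/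
open Filter Real Set intervalIntegral

lemma aux_mono1 (b : ℝ → ℝ) (hb : Differentiable ℝ b) (c T s : ℝ)
    (h : ∀ z, T ≤ z → z ≤ s → -c ≤ deriv b z) :
    MonotoneOn (fun z => b z + c * z) (Set.Icc T s) := by
  apply monotoneOn_of_deriv_nonneg (convex_Icc T s)
  · exact (hb.continuous.add (continuous_const.mul continuous_id)).continuousOn
  · exact fun x _ => ((hb x).add ((differentiable_id.const_mul c) x)).differentiableWithinAt
  · intro x hx
    rw [interior_Icc] at hx
    have hd : HasDerivAt (fun z => b z + c * z) (deriv b x + c * 1) x :=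
      ((hb x).hasDerivAt).add ((hasDerivAt_id x).const_mul c)
    rw [hd.deriv]
    have := h x hx.1.le hx.2.le
    linarith

lemma aux_mono2 (b : ℝ → ℝ) (hb : Differentiable ℝ b) (a T : ℝ)
    (h : ∀ z, T ≤ z → -(a / 2 * z) ≤ deriv b z) :
    MonotoneOn (fun z => b z + a / 4 * z ^ 2) (Set.Ici T) := by
  apply monotoneOn_of_deriv_nonneg (convex_Ici T)
  · exact (hb.continuous.add (continuous_const.mul (continuous_pow 2))).continuousOn
  · exact fun x _ =>
      ((hb x).add (((differentiable_pow 2).const_mul (a / 4)) x)).differentiableWithinAt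
  · intro x hx
    rw [interior_Ici] at hx
    have hd : HasDerivAt (fun z => b z + a / 4 * z ^ 2)
        (deriv b x + a / 4 * (2 * x ^ 1)) x :=
      ((hb x).hasDerivAt).add ((hasDerivAt_pow 2 x).const_mul (a / 4))
    rw [hd.deriv]
    have := h x hx.le
    nlinarith

lemma aux_exp_int (c T s : ℝ) (hc : 0 < c) (hTs : T ≤ s) :
    (∫ z in T..s, Real.exp (c * (z - s))) ≤ 1 / c := by
  have hd : ∀ z ∈ Set.uIcc T s,
      HasDerivAt (fun z => Real.exp (c * (z - s)) / c) (Real.exp (c * (z - s))) z := by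
    intro z _
    have : HasDerivAt (fun z => Real.exp (c * (z - s)) / c)
        (Real.exp (c * (z - s)) * (c * 1) / c) z :=
      ((((hasDerivAt_id z).sub_const s).const_mul c).exp).div_const c
    convert this using 1
    field_simp
  rw [intervalIntegral.integral_eq_sub_of_hasDerivAt hd
    (Continuous.intervalIntegrable (by continuity) T s)]
  have h1 : Real.exp (c * (s - s)) = 1 := by simp
  have h2 : 0 < Real.exp (c * (T - s)) := Real.exp_pos _
  rw [h1]
  rw [div_sub_div_same, div_le_div_iff₀ hc hc]
  nlinarith

set_option maxHeartbeats 1600000 in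
theorem stmt_17 (a : ℝ) (ha : 0 < a) (b : ℝ → ℝ) (hb : Differentiable ℝ b)
    (hb' : Tendsto (fun s => deriv b s / s) atTop (nhds 0))
    (f : ℝ → ℝ) (hf : ∀ s, f s = Real.exp (a * s ^ 2 + b s)) (s₁ : ℝ) (hs₁ : 1 < s₁) :
    Tendsto (fun s => (∫ z in s₁..s, (Real.log z / z) * f z) / (f s * Real.log s))
      atTop (nhds 0) := by
  have hfeq : f = fun s => Real.exp (a * s ^ 2 + b s) := funext hf
  have hfc : Continuous f := by
    rw [hfeq]
    exact Real.continuous_exp.comp ((continuous_const.mul (continuous_pow 2)).add hb.continuous)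
  have hfpos : ∀ s, 0 < f s := fun s => by rw [hf]; exact Real.exp_pos _
  -- choose T
  have h1 : ∀ᶠ z in atTop, dist (deriv b z / z) 0 < a / 2 :=
    (Metric.tendsto_nhds.mp hb') _ (by positivity)
  obtain ⟨T₀, hT₀⟩ := eventually_atTop.mp (h1.and (eventually_ge_atTop (1 : ℝ)))
  obtain ⟨T, hTdef⟩ : ∃ T : ℝ, T = max T₀ (max s₁ 2) := ⟨_, rfl⟩
  have hTs₁ : s₁ ≤ T := hTdef ▸ le_trans (le_max_left _ _) (le_max_right _ _)
  have hT2 : (2 : ℝ) ≤ T := hTdef ▸ le_trans (le_max_right _ _) (le_max_right _ _)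
  have hTpos : (0 : ℝ) < T := by linarith
  have hder : ∀ z, T ≤ z → -(a / 2 * z) ≤ deriv b z := by
    intro z hz
    obtain ⟨hlt, hz1⟩ := hT₀ z (le_trans (le_max_left _ _) (hTdef ▸ hz))
    rw [Real.dist_eq, sub_zero, abs_div] at hlt
    have hzpos : (0 : ℝ) < z := by linarith
    rw [abs_of_pos hzpos, div_lt_iff₀ hzpos] at hlt
    have := neg_abs_le (deriv b z)
    nlinarith [abs_nonneg (deriv b z)]
  -- f tends to atTop
  have hmono2 := aux_mono2 b hb a T hder
  have hftop : Tendsto f atTop atTop := by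
    rw [hfeq]
    apply Real.tendsto_exp_atTop.comp
    have hlow : (fun s => 3 * a / 4 * s ^ 2 + (b T + a / 4 * T ^ 2)) ≤ᶠ[atTop]
        fun s => a * s ^ 2 + b s := by
      filter_upwards [eventually_ge_atTop T] with s hs
      have := hmono2 (Set.self_mem_Ici) (Set.mem_Ici.mpr hs) hs
      simp only at this
      nlinarith
    apply tendsto_atTop_mono' atTop hlow
    apply tendsto_atTop_add_const_right
    exact Tendsto.const_mul_atTop (by positivity) (tendsto_pow_atTop two_ne_zero)
  -- pointwise bound f z ≤ f s * exp(-(a/2) s (s-z)) for T ≤ z ≤ s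
  have hpoint : ∀ s, T ≤ s → ∀ z, T ≤ z → z ≤ s →
      f z ≤ f s * Real.exp (a / 2 * s * (z - s)) := by
    intro s hs z hzT hzs
    have hmono1 := aux_mono1 b hb (a / 2 * s) T s (fun w hw hws => by
      have := hder w hw
      nlinarith)
    have hbz : b z + a / 2 * s * z ≤ b s + a / 2 * s * s :=
      hmono1 (Set.mem_Icc.mpr ⟨hzT, hzs⟩) (Set.mem_Icc.mpr ⟨hs, le_refl s⟩) hzs
    have hexp : a * z ^ 2 + b z ≤ (a * s ^ 2 + b s) + a / 2 * s * (z - s) := by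
      nlinarith [mul_nonneg (mul_nonneg ha.le (by linarith : (0:ℝ) ≤ s - z))
        (by linarith : (0:ℝ) ≤ z)]
    calc f z = Real.exp (a * z ^ 2 + b z) := hf z
      _ ≤ Real.exp ((a * s ^ 2 + b s) + a / 2 * s * (z - s)) := Real.exp_le_exp.mpr hexp
      _ = f s * Real.exp (a / 2 * s * (z - s)) := by rw [hf s, ← Real.exp_add]
  -- tail integral bound
  have htail : ∀ s, T ≤ s → (∫ z in T..s, f z) ≤ f s * (2 / (a * s)) := by
    intro s hs
    have hspos : (0 : ℝ) < s := by linarith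
    have hcpos : (0 : ℝ) < a / 2 * s := by positivity
    have hint1 : IntervalIntegrable f MeasureTheory.volume T s :=
      hfc.intervalIntegrable T s
    have hint2 : IntervalIntegrable (fun z => f s * Real.exp (a / 2 * s * (z - s)))
        MeasureTheory.volume T s := (Continuous.intervalIntegrable (by continuity) T s)
    calc (∫ z in T..s, f z)
        ≤ ∫ z in T..s, f s * Real.exp (a / 2 * s * (z - s)) := by
          apply intervalIntegral.integral_mono_on hs hint1 hint2
          intro z hz
          exact hpoint s hs z hz.1 hz.2
      _ = f s * ∫ z in T..s, Real.exp (a / 2 * s * (z - s)) :=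
          intervalIntegral.integral_const_mul _ _
      _ ≤ f s * (1 / (a / 2 * s)) := by
          apply mul_le_mul_of_nonneg_left (aux_exp_int _ T s hcpos hs) (hfpos s).le
      _ = f s * (2 / (a * s)) := by
          congr 1
          rw [div_eq_div_iff (by positivity) (by positivity)]
          ring
  -- nonnegativity of the integrand and main squeeze
  obtain ⟨C, hCdef⟩ : ∃ C : ℝ, C = ∫ z in s₁..T, f z := ⟨_, rfl⟩
  have hg_int : ∀ u v, 1 ≤ u → u ≤ v →
      IntervalIntegrable (fun z => Real.log z / z * f z) MeasureTheory.volume u v := by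
    intro u v hu huv
    apply ContinuousOn.intervalIntegrable
    have hne : ∀ z ∈ Set.uIcc u v, z ≠ 0 := by
      intro z hz
      rw [Set.uIcc_of_le huv] at hz
      intro h0
      rw [h0] at hz
      exact absurd hz.1 (by norm_num; linarith)
    apply ContinuousOn.mul _ hfc.continuousOn
    exact ContinuousOn.div (Real.continuousOn_log.mono fun z hz => hne z hz)
      continuousOn_id hne
  have hupper : ∀ s, T ≤ s →
      (∫ z in s₁..s, Real.log z / z * f z) / (f s * Real.log s) ≤
        C / f s + 2 / (a * s) := by
    intro s hs
    have hs₁s : s₁ ≤ s := le_trans hTs₁ hs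
    have hlogs : (0 : ℝ) < Real.log s := Real.log_pos (by linarith)
    have hfspos := hfpos s
    have hden : (0 : ℝ) < f s * Real.log s := mul_pos hfspos hlogs
    -- numerator bound
    have hnum : (∫ z in s₁..s, Real.log z / z * f z) ≤
        Real.log s * (C + f s * (2 / (a * s))) := by
      have hb1 : (∫ z in s₁..s, Real.log z / z * f z) ≤
          ∫ z in s₁..s, Real.log s * f z := by
        apply intervalIntegral.integral_mono_on hs₁s
          (hg_int s₁ s hs₁.le hs₁s)
          ((continuous_const.mul hfc).intervalIntegrable s₁ s)
        intro z hz
        have hz1 : (1 : ℝ) < z := lt_of_lt_of_le hs₁ hz.1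
        have hlz : 0 ≤ Real.log z := Real.log_nonneg hz1.le
        have : Real.log z / z ≤ Real.log s := by
          have h1 : Real.log z / z ≤ Real.log z := by
            rw [div_le_iff₀ (by linarith : (0 : ℝ) < z)]
            nlinarith
          have h2 : Real.log z ≤ Real.log s := Real.log_le_log (by linarith) hz.2
          linarith
        exact mul_le_mul_of_nonneg_right this (hfpos z).le
      have hb2 : (∫ z in s₁..s, Real.log s * f z) = Real.log s * ∫ z in s₁..s, f z :=
        intervalIntegral.integral_const_mul _ _
      have hb3 : (∫ z in s₁..s, f z) = C + ∫ z in T..s, f z := by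
        rw [hCdef]
        exact (intervalIntegral.integral_add_adjacent_intervals
          (hfc.intervalIntegrable s₁ T) (hfc.intervalIntegrable T s)).symm
      have hb4 := htail s hs
      calc (∫ z in s₁..s, Real.log z / z * f z)
          ≤ Real.log s * ∫ z in s₁..s, f z := hb2 ▸ hb1
        _ = Real.log s * (C + ∫ z in T..s, f z) := by rw [hb3]
        _ ≤ Real.log s * (C + f s * (2 / (a * s))) := by
            apply mul_le_mul_of_nonneg_left _ hlogs.le
            linarith
    rw [div_le_iff₀ hden]
    calc (∫ z in s₁..s, Real.log z / z * f z)
        ≤ Real.log s * (C + f s * (2 / (a * s))) := hnum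
      _ = (C / f s + 2 / (a * s)) * (f s * Real.log s) := by
          have h1 : f s ≠ 0 := (hfpos s).ne'
          have h2 : a * s ≠ 0 := (mul_pos ha (by linarith : (0:ℝ) < s)).ne'
          field_simp
  have hlower : ∀ s, T ≤ s →
      0 ≤ (∫ z in s₁..s, Real.log z / z * f z) / (f s * Real.log s) := by
    intro s hs
    have hs₁s : s₁ ≤ s := le_trans hTs₁ hs
    have hlogs : (0 : ℝ) < Real.log s := Real.log_pos (by linarith)
    apply div_nonneg _ (mul_pos (hfpos s) hlogs).le
    apply intervalIntegral.integral_nonneg hs₁s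
    intro z hz
    have hz1 : (1 : ℝ) ≤ z := le_trans hs₁.le hz.1
    have hzpos : (0 : ℝ) < z := by linarith
    have hlz := Real.log_nonneg hz1
    exact mul_nonneg (div_nonneg hlz hzpos.le) (hfpos z).le
  -- limits of the bounding functions
  have hbound : Tendsto (fun s => C / f s + 2 / (a * s)) atTop (nhds 0) := by
    have h1 : Tendsto (fun s => C / f s) atTop (nhds 0) :=
      Tendsto.div_atTop tendsto_const_nhds hftop
    have h2 : Tendsto (fun s : ℝ => 2 / (a * s)) atTop (nhds 0) :=
      Tendsto.div_atTop tendsto_const_nhds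
        (Tendsto.const_mul_atTop ha tendsto_id)
    have h3 := h1.add h2
    rw [add_zero] at h3
    exact h3
  apply tendsto_of_tendsto_of_tendsto_of_le_of_le' tendsto_const_nhds hbound
  · filter_upwards [eventually_ge_atTop T] with s hs using hlower s hs
  · filter_upwards [eventually_ge_atTop T] with s hs using hupper s hs
end
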